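/- arXiv:1910.12364 — 7 statements merged into one kernel-verified Lean document; each statement's English description precedes it below -/
import Mathlib

section
/- For every finite graph G, the neighbor connectivity of G is at most the vertex connectivity of G: κ_NB(G) ≤ κ(G). -/
open SimpleGraph

/-- Vertex connectivity: the least number of vertices whose removal leaves
a disconnected or trivial (single-vertex) graph. -/
noncomputable def vConn {V : Type*} (G : SimpleGraph V) : ℕ :=
  sInf {m | ∃ S : Set V, S.Finite ∧ S.ncard = m ∧
    (¬ (G.induce Sᶜ).Connected ∨ ∃ v, Sᶜ = {v})}

/-- Closed neighborhood of a set of vertices. -/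
def closedNbhd {V : Type*} (G : SimpleGraph V) (U : Set V) : Set V :=
  U ∪ {v | ∃ u ∈ U, G.Adj u v}

/-- The survival graph `G ⊖ U`: the subgraph induced on vertices
outside the closed neighborhood of `U`. -/
def survival {V : Type*} (G : SimpleGraph V) (U : Set V) :
    SimpleGraph (↥(closedNbhd G U)ᶜ) := G.induce (closedNbhd G U)ᶜ

/-- The survival graph of `U` is disconnected, complete, or empty. -/
def SurvivalBad {V : Type*} (G : SimpleGraph V) (U : Set V) : Prop :=
  ((closedNbhd G U)ᶜ ≠ ∅ ∧ ¬ (survival G U).Connected) ∨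
  (∀ a ∈ (closedNbhd G U)ᶜ, ∀ b ∈ (closedNbhd G U)ᶜ, a ≠ b → G.Adj a b) ∨
  (closedNbhd G U)ᶜ = ∅

/-- Neighbor connectivity. -/
noncomputable def nbConn {V : Type*} (G : SimpleGraph V) : ℕ :=
  sInf {m | ∃ U : Set V, U.Finite ∧ U.ncard = m ∧ SurvivalBad G U}

/-- The `k`-ary `n`-cube. -/
def QCube (n k : ℕ) : SimpleGraph (Fin n → ZMod k) where
  Adj u v := u ≠ v ∧ ∃ j, (u j = v j + 1 ∨ u j = v j - 1) ∧ ∀ i ≠ j, u i = v i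
  symm := by
    constructor
    rintro u v ⟨hne, j, hj, hrest⟩
    refine ⟨hne.symm, j, ?_, fun i hi => (hrest i hi).symm⟩
    rcases hj with h | h
    · right; rw [h]; ring
    · left; rw [h]; ring
  loopless := by constructor; rintro u ⟨hne, _⟩; exact hne rfl

/-!
Let `S` be a minimum vertex cut, splitting `G - S` into sides `C₁` and `C₂` with no edges
between them; by minimality every `s ∈ S` has a neighbour `x s ∈ C₁` and a neighbour `y s ∈ C₂`.
Suppose no set of at most `|S|` vertices has a bad survival graph. Then every such `U` with
`S ⊆ N[U]` dominates exactly one of `C₁`, `C₂`: both would leave nothing, neither would leave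
a disconnected graph. Swapping the transversal `x '' S` (dominating `C₁`) one vertex at a time
into `y '' S` (dominating `C₂`), some swap `x s ↦ y s` on a common part `A` turns domination of
`C₁` into domination of `C₂`. Then `A ∪ {s}` dominates one side, say `C₁`, and each neighbour of
`s` in `C₁` dominates `C₁ \ N[A]`, which is therefore a clique; it is exactly what survives
`A ∪ {y s}`, a contradiction.
-/

section ClosedNbhd

variable {V : Type*} (G : SimpleGraph V)

lemma subset_closedNbhd (U : Set V) : U ⊆ closedNbhd G U := Set.subset_union_left

lemma closedNbhd_mono {A B : Set V} (h : A ⊆ B) : closedNbhd G A ⊆ closedNbhd G B := by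
  rintro v (hv | ⟨u, hu, huv⟩)
  · exact Or.inl (h hv)
  · exact Or.inr ⟨u, h hu, huv⟩

lemma mem_closedNbhd_insert {A : Set V} {w v : V} :
    v ∈ closedNbhd G (insert w A) ↔ v = w ∨ G.Adj w v ∨ v ∈ closedNbhd G A := by
  simp only [closedNbhd, Set.mem_union, Set.mem_insert_iff, Set.mem_ofPred_eq,
    exists_eq_or_imp]
  tauto

lemma subset_closedNbhd_image {B : Set V} {f : V → V} (hf : ∀ b ∈ B, G.Adj b (f b)) :
    B ⊆ closedNbhd G (f '' B) :=
  fun b hb => Or.inr ⟨f b, Set.mem_image_of_mem f hb, (hf b hb).symm⟩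

lemma subset_closedNbhd_insert {S A : Set V} {s w : V} (hA : S \ {s} ⊆ closedNbhd G A)
    (hw : w = s ∨ G.Adj s w) : S ⊆ closedNbhd G (insert w A) := by
  intro s' hs'
  rw [mem_closedNbhd_insert]
  by_cases hs's : s' = s
  · subst hs's
    rcases hw with rfl | hsw
    exacts [Or.inl rfl, Or.inr (Or.inl hsw.symm)]
  · exact Or.inr (Or.inr (hA ⟨hs', hs's⟩))

lemma survivalBad_of_isClique {U K : Set V} (hK : G.IsClique K)
    (hU : (closedNbhd G U)ᶜ ⊆ K) : SurvivalBad G U :=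
  Or.inr (Or.inl fun _ ha _ hb hab => hK (hU ha) (hU hb) hab)

lemma survivalBad_of_compl_subsingleton {S : Set V} (hS : Sᶜ.Subsingleton) :
    SurvivalBad G S :=
  survivalBad_of_isClique G (IsClique.of_subsingleton hS)
    (Set.compl_subset_compl.mpr (subset_closedNbhd G S))

end ClosedNbhd

lemma SimpleGraph.Reachable.mem_of_adj_mem {α : Type*} {H : SimpleGraph α} {W : Set α}
    (hW : ∀ ⦃a b⦄, a ∈ W → H.Adj a b → b ∈ W) {a b : α} (h : H.Reachable a b) (ha : a ∈ W) :
    b ∈ W := by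
  obtain ⟨p⟩ := h
  induction p with
  | nil => exact ha
  | cons hadj _ ih => exact ih (hW ha hadj)

section Transversal

variable {α β : Type*} (f g : α → β) {S σ : Set α} {s : α}

lemma image_sdiff_union_image_eq_insert (hs : s ∈ S) (hsσ : s ∉ σ) :
    f '' (S \ σ) ∪ g '' σ = insert (f s) (f '' (S \ insert s σ) ∪ g '' σ) := by
  rw [← Set.insert_union, ← Set.image_insert_eq]
  congr 2
  ext v
  by_cases hv : v = s <;> simp [hv, hs, hsσ]

lemma ncard_insert_image_sdiff_union_image_le (w : β) (hS : S.Finite) (hs : s ∈ S)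
    (hσ : σ ⊆ S) (hsσ : s ∉ σ) : (insert w (f '' (S \ insert s σ) ∪ g '' σ)).ncard ≤ S.ncard :=
  calc (insert w (f '' (S \ insert s σ) ∪ g '' σ)).ncard
      ≤ (S \ insert s σ).ncard + σ.ncard + 1 :=
        (Set.ncard_insert_le _ _).trans <| Nat.add_le_add_right ((Set.ncard_union_le _ _).trans
          (Nat.add_le_add (Set.ncard_image_le hS.sdiff) (Set.ncard_image_le (hS.subset hσ)))) 1
    _ = S.ncard := by
        rw [add_assoc, ← Set.ncard_insert_of_notMem hsσ (hS.subset hσ),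
          Set.ncard_sdiff_add_ncard_of_subset (Set.insert_subset hs hσ) hS]

end Transversal

structure IsSeparation {V : Type*} (G : SimpleGraph V) (S C₁ C₂ : Set V) : Prop where
  compl_eq : Sᶜ = C₁ ∪ C₂
  disjoint : Disjoint C₁ C₂
  not_adj : ∀ ⦃a⦄, a ∈ C₁ → ∀ ⦃b⦄, b ∈ C₂ → ¬ G.Adj a b
  nonempty_left : C₁.Nonempty
  nonempty_right : C₂.Nonempty

namespace IsSeparation

variable {V : Type*} {G : SimpleGraph V} {S C₁ C₂ : Set V}

lemma symm (h : IsSeparation G S C₁ C₂) : IsSeparation G S C₂ C₁ where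
  compl_eq := h.compl_eq.trans (Set.union_comm _ _)
  disjoint := h.disjoint.symm
  not_adj _ ha _ hb hab := h.not_adj hb ha hab.symm
  nonempty_left := h.nonempty_right
  nonempty_right := h.nonempty_left

lemma notMem_of_mem_left (h : IsSeparation G S C₁ C₂) {v : V} (hv : v ∈ C₁) : v ∉ S :=
  Set.mem_compl_iff S v |>.mp (h.compl_eq ▸ Or.inl hv)

lemma disjoint_closedNbhd (h : IsSeparation G S C₁ C₂) {W : Set V} (hW : W ⊆ C₂) :
    Disjoint C₁ (closedNbhd G W) := by
  rw [Set.disjoint_left]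
  rintro v hv (hvW | ⟨u, hu, huv⟩)
  · exact h.disjoint.ne_of_mem hv (hW hvW) rfl
  · exact h.not_adj hv (hW hu) huv.symm

lemma mem_closedNbhd_insert_iff (h : IsSeparation G S C₁ C₂) {A : Set V} {v w : V}
    (hv : v ∈ C₁) (hw : w ∈ C₂) : v ∈ closedNbhd G (insert w A) ↔ v ∈ closedNbhd G A := by
  rw [mem_closedNbhd_insert, or_iff_right (h.disjoint.ne_of_mem hv hw),
    or_iff_right fun hwv => h.not_adj hv hw hwv.symm]

lemma compl_closedNbhd_subset (h : IsSeparation G S C₁ C₂) {U A : Set V}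
    (hS : S ⊆ closedNbhd G U) (h₂ : C₂ ⊆ closedNbhd G U) (hAU : A ⊆ U) :
    (closedNbhd G U)ᶜ ⊆ C₁ \ closedNbhd G A := by
  intro v hv
  have hvS : v ∈ C₁ ∪ C₂ := h.compl_eq ▸ fun hvS => hv (hS hvS)
  refine ⟨hvS.resolve_right fun hv₂ => hv (h₂ hv₂), fun hvA => hv ?_⟩
  exact closedNbhd_mono G hAU hvA

lemma subset_closedNbhd_iff (h : IsSeparation G S C₁ C₂) {U : Set V}
    (hU : ¬ SurvivalBad G U) (hS : S ⊆ closedNbhd G U) :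
    C₁ ⊆ closedNbhd G U ↔ ¬ C₂ ⊆ closedNbhd G U := by
  have hsub : (closedNbhd G U)ᶜ ⊆ C₁ ∪ C₂ := h.compl_eq ▸ Set.compl_subset_compl.mpr hS
  constructor
  · intro h₁ h₂
    refine hU (Or.inr (Or.inr (Set.eq_empty_of_forall_notMem fun v hv => ?_)))
    rcases hsub hv with hv₁ | hv₂
    exacts [hv (h₁ hv₁), hv (h₂ hv₂)]
  · intro h₂
    by_contra h₁
    obtain ⟨p, hp₁, hpU⟩ := Set.not_subset.mp h₁
    obtain ⟨q, hq₂, hqU⟩ := Set.not_subset.mp h₂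
    refine hU (Or.inl ⟨Set.nonempty_iff_ne_empty.mp ⟨p, hpU⟩, fun hconn => ?_⟩)
    have hclosed : ∀ ⦃a b : ↥(closedNbhd G U)ᶜ⦄, (a : V) ∈ C₁ → (survival G U).Adj a b →
        (b : V) ∈ C₁ := fun a b ha hab =>
      (hsub b.2).resolve_right fun hb => h.not_adj ha hb hab
    have hq₁ : q ∈ C₁ := (hconn.preconnected ⟨p, hpU⟩ ⟨q, hqU⟩).mem_of_adj_mem
      (W := Subtype.val ⁻¹' C₁) hclosed hp₁
    exact h.disjoint.ne_of_mem hq₁ hq₂ rfl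

lemma isClique_diff_closedNbhd (h : IsSeparation G S C₁ C₂) {A : Set V} {s : V}
    (hsS : s ∈ S) (hA : S \ {s} ⊆ closedNbhd G A) (hgood : ∀ w, ¬ SurvivalBad G (insert w A))
    (hC₂ : ¬ C₂ ⊆ closedNbhd G A) (hsC₁ : C₁ ⊆ closedNbhd G (insert s A)) :
    G.IsClique (C₁ \ closedNbhd G A) := by
  have hdom : ∀ x ∈ C₁, G.Adj s x → ∀ p ∈ C₁ \ closedNbhd G A, p = x ∨ G.Adj x p := by
    intro x hx hsx p hp
    have hxC₂ : ¬ C₂ ⊆ closedNbhd G (insert x A) := fun hxC₂ =>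
      hC₂ fun q hq => (h.symm.mem_closedNbhd_insert_iff hq hx).mp (hxC₂ hq)
    have hp' := (h.subset_closedNbhd_iff (hgood x)
      (subset_closedNbhd_insert G hA (Or.inr hsx))).mpr hxC₂ hp.1
    rw [mem_closedNbhd_insert] at hp'
    exact (or_assoc.mpr hp').resolve_right hp.2
  intro p hp p' hp' hne
  have hsp : G.Adj s p := by
    have := hsC₁ hp.1
    rw [mem_closedNbhd_insert] at this
    rcases this with rfl | hsp | hpA
    exacts [absurd hsS (h.notMem_of_mem_left hp.1), hsp, absurd hpA hp.2]
  exact (hdom p hp.1 hsp p' hp').resolve_left (Ne.symm hne)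

lemma subset_closedNbhd_insert_of_swap (h : IsSeparation G S C₁ C₂) {A : Set V} {s x y : V}
    (hsS : s ∈ S) (hA : S \ {s} ⊆ closedNbhd G A) (hgood : ∀ w, ¬ SurvivalBad G (insert w A))
    (hsx : G.Adj s x) (hsy : G.Adj s y)
    (hxA : C₁ ⊆ closedNbhd G (insert x A)) : C₁ ⊆ closedNbhd G (insert y A) := by
  have hSx := subset_closedNbhd_insert G hA (Or.inr hsx)
  have hSy := subset_closedNbhd_insert G hA (Or.inr hsy)
  have hSs := subset_closedNbhd_insert G hA (Or.inl rfl)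
  by_contra hyA
  have hC₁ : ¬ C₁ ⊆ closedNbhd G A := fun hC₁ =>
    hyA (hC₁.trans (closedNbhd_mono G (Set.subset_insert y A)))
  have hC₂ : ¬ C₂ ⊆ closedNbhd G A := fun hC₂ =>
    (h.subset_closedNbhd_iff (hgood x) hSx).mp hxA
      (hC₂.trans (closedNbhd_mono G (Set.subset_insert x A)))
  have hyC₂ := (h.symm.subset_closedNbhd_iff (hgood y) hSy).mpr hyA
  by_cases hsC₁ : C₁ ⊆ closedNbhd G (insert s A)
  · refine hgood y (survivalBad_of_isClique G
      (h.isClique_diff_closedNbhd hsS hA hgood hC₂ hsC₁) ?_)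
    exact h.compl_closedNbhd_subset hSy hyC₂ (Set.subset_insert y A)
  · have hsC₂ := (h.symm.subset_closedNbhd_iff (hgood s) hSs).mpr hsC₁
    refine hgood x (survivalBad_of_isClique G
      (h.symm.isClique_diff_closedNbhd hsS hA hgood hC₁ hsC₂) ?_)
    exact h.symm.compl_closedNbhd_subset hSx hxA (Set.subset_insert x A)

theorem exists_survivalBad (h : IsSeparation G S C₁ C₂) (hS : S.Finite)
    (hnbr : ∀ s ∈ S, (∃ x ∈ C₁, G.Adj s x) ∧ ∃ y ∈ C₂, G.Adj s y) :
    ∃ U : Set V, U.ncard ≤ S.ncard ∧ SurvivalBad G U := by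
  by_contra! hgood
  choose! x hx hsx using fun s hs => (hnbr s hs).1
  choose! y hy hsy using fun s hs => (hnbr s hs).2
  have hbase : C₁ ⊆ closedNbhd G (x '' (S \ ∅) ∪ y '' ∅) := by
    rw [Set.sdiff_empty, Set.image_empty, Set.union_empty]
    refine (h.subset_closedNbhd_iff (hgood _ (Set.ncard_image_le hS))
      (subset_closedNbhd_image G hsx)).mpr fun hC₂ => ?_
    obtain ⟨q, hq⟩ := h.nonempty_right
    exact Set.disjoint_left.mp (h.symm.disjoint_closedNbhd (Set.image_subset_iff.mpr hx)) hq
      (hC₂ hq)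
  have hend : C₁ ⊆ closedNbhd G (x '' (S \ S) ∪ y '' S) := by
    refine Set.Finite.induction_on_subset S hS
      (motive := fun σ _ => C₁ ⊆ closedNbhd G (x '' (S \ σ) ∪ y '' σ)) hbase ?_
    intro s σ hs hσ hsσ ih
    set A := x '' (S \ insert s σ) ∪ y '' σ
    have hA : S \ {s} ⊆ closedNbhd G A := by
      intro s' ⟨hs', hs's⟩
      by_cases hs'σ : s' ∈ σ
      · exact closedNbhd_mono G Set.subset_union_right
          (subset_closedNbhd_image G (fun b hb => hsy b (hσ hb)) hs'σ)
      · refine closedNbhd_mono G Set.subset_union_left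
          (subset_closedNbhd_image G (fun b hb => hsx b hb.1) ⟨hs', ?_⟩)
        rintro (rfl | h'); exacts [hs's rfl, hs'σ h']
    rw [Set.image_insert_eq, Set.union_insert]
    rw [image_sdiff_union_image_eq_insert x y hs hsσ] at ih
    exact h.subset_closedNbhd_insert_of_swap hs hA
      (fun w => hgood _ (ncard_insert_image_sdiff_union_image_le x y w hS hs hσ hsσ))
      (hsx s hs) (hsy s hs) ih
  rw [Set.sdiff_self, Set.image_empty, Set.empty_union] at hend
  obtain ⟨p, hp⟩ := h.nonempty_left
  exact Set.disjoint_left.mp (h.disjoint_closedNbhd (Set.image_subset_iff.mpr hy)) hp (hend hp)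

end IsSeparation

section VertexCut

variable {V : Type*} {G : SimpleGraph V}

lemma exists_isSeparation_of_not_connected {S : Set V} (hS : Sᶜ.Nonempty)
    (hconn : ¬ (G.induce Sᶜ).Connected) : ∃ C₁ C₂, IsSeparation G S C₁ C₂ := by
  have : Nonempty ↥Sᶜ := hS.to_subtype
  obtain ⟨a, b, hab⟩ : ∃ a b, ¬ (G.induce Sᶜ).Reachable a b := by
    by_contra! h
    exact hconn ⟨h⟩
  set R := {c | (G.induce Sᶜ).Reachable a c}
  refine ⟨Subtype.val '' R, Subtype.val '' Rᶜ,
    ⟨?_, ?_, ?_, ⟨a, a, Reachable.refl a, rfl⟩, ⟨b, b, hab, rfl⟩⟩⟩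
  · rw [← Set.image_union, Set.union_compl_self, Set.image_univ, Subtype.range_coe]
  · exact (Set.disjoint_image_iff Subtype.val_injective).mpr disjoint_compl_right
  · rintro _ ⟨c, hc, rfl⟩ _ ⟨d, hd, rfl⟩ hcd
    exact hd (hc.trans (Adj.reachable (comap_adj.mpr hcd)))

lemma IsSeparation.exists_adj_right {S C₁ C₂ : Set V} (h : IsSeparation G S C₁ C₂) {s : V}
    (hs : s ∈ S) (hconn : (G.induce (S \ {s})ᶜ).Preconnected) : ∃ y ∈ C₂, G.Adj s y := by
  by_contra! hno
  obtain ⟨x, hx⟩ := h.nonempty_left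
  obtain ⟨y, hy⟩ := h.nonempty_right
  have hsub : ∀ {v}, v ∈ C₁ ∪ C₂ → v ∈ (S \ {s})ᶜ := fun hv hvS =>
    (h.compl_eq ▸ hv : _ ∈ Sᶜ) hvS.1
  have hclosed : ∀ ⦃a b : ↥(S \ {s})ᶜ⦄, (a : V) ∈ insert s C₁ →
      (G.induce (S \ {s})ᶜ).Adj a b → (b : V) ∈ insert s C₁ := by
    intro a b ha hab
    by_cases hbs : (b : V) = s
    · exact Or.inl hbs
    have hb' : (b : V) ∈ C₁ ∪ C₂ := h.compl_eq ▸ fun hbS => b.2 ⟨hbS, hbs⟩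
    refine Or.inr (hb'.resolve_right fun hb₂ => ?_)
    rcases ha with has | ha₁
    · have hsb : G.Adj a b := hab
      rw [has] at hsb
      exact hno b hb₂ hsb
    · exact h.not_adj ha₁ hb₂ hab
  rcases (hconn ⟨x, hsub (Or.inl hx)⟩ ⟨y, hsub (Or.inr hy)⟩).mem_of_adj_mem
    (W := Subtype.val ⁻¹' insert s C₁) hclosed (Or.inr hx) with hys | hy₁
  exacts [h.symm.notMem_of_mem_left hy (by rwa [← hys] at hs), h.disjoint.ne_of_mem hy₁ hy rfl]

lemma nbConn_le {U : Set V} (hU : U.Finite) (hbad : SurvivalBad G U) : nbConn G ≤ U.ncard :=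
  Nat.sInf_le ⟨U, hU, rfl, hbad⟩

lemma vConn_le {S : Set V} (hS : S.Finite)
    (hcut : ¬ (G.induce Sᶜ).Connected ∨ ∃ v, Sᶜ = {v}) : vConn G ≤ S.ncard :=
  Nat.sInf_le ⟨S, hS, rfl, hcut⟩

lemma exists_ncard_eq_vConn [Finite V] (G : SimpleGraph V) :
    ∃ S : Set V, S.ncard = vConn G ∧ (¬ (G.induce Sᶜ).Connected ∨ ∃ v, Sᶜ = {v}) := by
  obtain ⟨S, -, hS, hcut⟩ := Nat.sInf_mem (s := {m | ∃ S : Set V, S.Finite ∧ S.ncard = m ∧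
      (¬ (G.induce Sᶜ).Connected ∨ ∃ v, Sᶜ = {v})})
    ⟨_, Set.univ, Set.toFinite _, rfl, Or.inl fun h => h.nonempty.elim fun v => v.2 trivial⟩
  exact ⟨S, hS, hcut⟩

lemma exists_survivalBad_ncard_le_vConn [Finite V] (G : SimpleGraph V) :
    ∃ U : Set V, U.ncard ≤ vConn G ∧ SurvivalBad G U := by
  obtain ⟨S, hS, hcut⟩ := exists_ncard_eq_vConn G
  rcases Sᶜ.subsingleton_or_nontrivial with hsub | hnt
  · exact ⟨S, hS.le, survivalBad_of_compl_subsingleton G hsub⟩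
  obtain ⟨C₁, C₂, hsep⟩ := exists_isSeparation_of_not_connected hnt.nonempty
    (hcut.resolve_right fun ⟨v, hv⟩ => hnt.not_subsingleton (hv ▸ Set.subsingleton_singleton))
  have hmin : ∀ s ∈ S, (G.induce (S \ {s})ᶜ).Preconnected := fun s hs => by
    by_contra hdis
    have := vConn_le (Set.toFinite _) (Or.inl fun h => hdis h.preconnected)
    have := Set.ncard_sdiff_singleton_lt_of_mem hs
    omega
  obtain ⟨U, hU, hbad⟩ := hsep.exists_survivalBad S.toFinite fun s hs =>
    ⟨hsep.symm.exists_adj_right hs (hmin s hs), hsep.exists_adj_right hs (hmin s hs)⟩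
  exact ⟨U, hS ▸ hU, hbad⟩

end VertexCut

/-- Neighbor connectivity is at most vertex connectivity. -/
theorem stmt3 {V : Type*} [Fintype V] (G : SimpleGraph V) :
    nbConn G ≤ vConn G := by
  obtain ⟨U, hU, hbad⟩ := exists_survivalBad_ncard_le_vConn G
  exact (nbConn_le U.toFinite hbad).trans hU
end

section
/- In the 3-ary n-cube Q_n^3, two distinct vertices x and y have exactly one common neighbor if and only if x and y are adjacent. -/
open SimpleGraph

/-! For `k = 3` the graph `Q_n^3` is the Hamming graph on `(ZMod 3)^n`: vertices are adjacent iff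
they differ in exactly one coordinate. If `x` and `y` differ only at `j`, their common neighbours
are the vertices obtained from `x` by setting coordinate `j` to a value other than `x j` and `y j`,
and `ZMod 3` has exactly one such value. If `x ≠ y` are not adjacent but have a common neighbour, they
differ in exactly two coordinates `k ≠ k'`, and changing either of them first yields two distinct
common neighbours. -/

def hammingGraph (ι α : Type*) : SimpleGraph (ι → α) where
  Adj u v := ∃ j, u j ≠ v j ∧ ∀ i ≠ j, u i = v i
  symm := ⟨fun _ _ ⟨j, hj, hrest⟩ => ⟨j, hj.symm, fun i hi => (hrest i hi).symm⟩⟩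
  loopless := ⟨fun _ ⟨_, hj, _⟩ => hj rfl⟩

namespace hammingGraph

variable {ι α : Type*}

open Function

theorem adj_iff {u v : ι → α} :
    (hammingGraph ι α).Adj u v ↔ ∃ j, u j ≠ v j ∧ ∀ i ≠ j, u i = v i := Iff.rfl

theorem adj_update_iff [DecidableEq ι] {x : ι → α} {j : ι} {c : α} :
    (hammingGraph ι α).Adj x (update x j c) ↔ c ≠ x j := by
  refine ⟨fun ⟨k, hk, _⟩ => ?_, fun hc => ⟨j, by simpa using hc.symm, fun i hi => by simp [hi]⟩⟩
  by_cases hkj : k = j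
  · subst hkj; simpa [eq_comm] using hk
  · simp [hkj] at hk

theorem eq_of_adj_of_adj {x y z : ι → α} {j k : ι} (hxy : x j ≠ y j) (hxy' : ∀ i ≠ j, x i = y i)
    (hxz : x k ≠ z k) (hxz' : ∀ i ≠ k, x i = z i) (hyz : (hammingGraph ι α).Adj y z) : k = j := by
  obtain ⟨k', hyz, hyz'⟩ := hyz
  by_contra hkj
  have hk'j : k' = j := by
    by_contra h
    exact hxy ((hxz' j (Ne.symm hkj)).trans (hyz' j (Ne.symm h)).symm)
  subst hk'j
  exact hxz ((hxy' k hkj).trans (hyz' k hkj))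

theorem commonNeighbors_eq_image_update [DecidableEq ι] {x y : ι → α} {j : ι} (hxy : x j ≠ y j)
    (hxy' : ∀ i ≠ j, x i = y i) :
    (hammingGraph ι α).commonNeighbors x y = update x j '' {x j, y j}ᶜ := by
  ext z
  rw [mem_commonNeighbors]
  constructor
  · rintro ⟨⟨k, hxz, hxz'⟩, ⟨k', hyz, hyz'⟩⟩
    obtain rfl : k = j := eq_of_adj_of_adj hxy hxy' hxz hxz' ⟨k', hyz, hyz'⟩
    obtain rfl : k' = k := eq_of_adj_of_adj (Ne.symm hxy) (fun i hi => (hxy' i hi).symm) hyz hyz'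
      ⟨k, hxz, hxz'⟩
    refine ⟨z k', ?_, update_eq_iff.mpr ⟨rfl, hxz'⟩⟩
    simp [eq_comm, hxz, hyz]
  · rintro ⟨c, hc, rfl⟩
    simp only [Set.mem_compl_iff, Set.mem_insert_iff, Set.mem_singleton_iff, not_or] at hc
    have hupdate : update x j c = update y j c := by
      funext i
      by_cases hi : i = j
      · subst hi; simp
      · simp [hi, hxy' i hi]
    exact ⟨adj_update_iff.mpr hc.1, hupdate ▸ adj_update_iff.mpr hc.2⟩

theorem ncard_commonNeighbors_of_adj [DecidableEq ι] [Finite α] {x y : ι → α}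
    (h : (hammingGraph ι α).Adj x y) :
    ((hammingGraph ι α).commonNeighbors x y).ncard = Nat.card α - 2 := by
  obtain ⟨j, hxy, hxy'⟩ := h
  rw [commonNeighbors_eq_image_update hxy hxy',
    Set.ncard_image_of_injective _ (update_injective x j), Set.ncard_compl, Set.ncard_pair hxy]

theorem exists_ne_mem_commonNeighbors [DecidableEq ι] {x y z : ι → α} (hne : x ≠ y)
    (hnadj : ¬ (hammingGraph ι α).Adj x y) (hz : z ∈ (hammingGraph ι α).commonNeighbors x y) :
    ∃ w ∈ (hammingGraph ι α).commonNeighbors x y, w ≠ z := by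
  obtain ⟨⟨k, hxz, hxz'⟩, ⟨k', hyz, hyz'⟩⟩ := hz
  have hxy' : ∀ i, i ≠ k → i ≠ k' → x i = y i := fun i hk hk' => (hxz' i hk).trans (hyz' i hk').symm
  have hkk' : k ≠ k' := by
    rintro rfl
    refine hnadj ⟨k, fun h => hne ?_, fun i hi => hxy' i hi hi⟩
    funext i
    by_cases hi : i = k
    · exact hi ▸ h
    · exact hxy' i hi hi
  have hxyk : x k ≠ y k := hyz' k hkk' ▸ hxz
  have hyxk' : y k' ≠ x k' := hxz' k' hkk'.symm ▸ hyz
  have hupdate : update x k' (y k') = update y k (x k) := by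
    funext i
    by_cases hi : i = k
    · subst hi; simp [hkk']
    by_cases hi' : i = k'
    · subst hi'; simp [hi]
    · simp [hi, hi', hxy' i hi hi']
  refine ⟨update x k' (y k'), ⟨adj_update_iff.mpr hyxk', hupdate ▸ adj_update_iff.mpr hxyk⟩, ?_⟩
  intro h
  apply hxz
  rw [← h, update_of_ne hkk']

theorem ncard_commonNeighbors_ne_one [DecidableEq ι] {x y : ι → α} (hne : x ≠ y)
    (hnadj : ¬ (hammingGraph ι α).Adj x y) :
    ((hammingGraph ι α).commonNeighbors x y).ncard ≠ 1 := by
  intro h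
  obtain ⟨z, hz⟩ := Set.ncard_eq_one.mp h
  obtain ⟨w, hw, hwz⟩ := exists_ne_mem_commonNeighbors hne hnadj (hz ▸ rfl : z ∈ _)
  exact hwz (Set.mem_singleton_iff.mp (hz ▸ hw))

end hammingGraph

theorem ZMod.three_ne_iff {a b : ZMod 3} : a ≠ b ↔ a = b + 1 ∨ a = b - 1 := by
  revert a b; decide

theorem qCube_three_eq_hammingGraph (n : ℕ) : QCube n 3 = hammingGraph (Fin n) (ZMod 3) := by
  ext u v
  simp only [QCube, hammingGraph.adj_iff, ← ZMod.three_ne_iff]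
  exact ⟨fun ⟨_, h⟩ => h, fun ⟨j, hj, h⟩ => ⟨fun huv => hj (congrFun huv j), j, hj, h⟩⟩

theorem stmt7 (n : ℕ) (x y : Fin n → ZMod 3) (hxy : x ≠ y) :
    ((QCube n 3).neighborSet x ∩ (QCube n 3).neighborSet y).ncard = 1 ↔
      (QCube n 3).Adj x y := by
  rw [← commonNeighbors, qCube_three_eq_hammingGraph]
  refine ⟨fun h => ?_, fun h => ?_⟩
  · by_contra hnadj
    exact hammingGraph.ncard_commonNeighbors_ne_one hxy hnadj h
  · rw [hammingGraph.ncard_commonNeighbors_of_adj h, Nat.card_zmod]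
end

section
/- For n ≥ 2 and k ≥ 3, the vertex connectivity of the k-ary n-cube equals 2n: κ(Q_n^k) = 2n. -/
open SimpleGraph

/-!
Removing the `2n` neighbours of a vertex isolates it, so `κ(Q_n^k) ≤ 2n`. For the lower bound,
induction on `n` shows that any two vertices outside a set `F` of at most `2n - 1` vertices are
joined by a walk avoiding `F`. Slice `Q_{n+1}^k` by the last coordinate into `k` layers, copies of
`Q_n^k`. As `|F| ≤ 2n + 1`, at most one layer is heavy (holds at least `2n` vertices of `F`).
Survivors in a light layer are connected by induction; two consecutive light layers hold fewer than
`k^n` vertices of `F`, so some edge between them avoids `F`; and the light layers form the cycle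
`ℤ_k` with at most one vertex removed. A survivor in the heavy layer has its two neighbours in the
adjacent layers, which together hold at most one vertex of `F`.
-/

namespace SimpleGraph

variable {V W : Type*} {G : SimpleGraph V} {H : SimpleGraph W}

def ReachableAvoiding (G : SimpleGraph V) (F : Set V) (u v : V) : Prop :=
  ∃ p : G.Walk u v, ∀ x ∈ p.support, x ∉ F

namespace ReachableAvoiding

variable {F : Set V} {u v w : V}

theorem refl (hu : u ∉ F) : G.ReachableAvoiding F u u :=
  ⟨.nil, by simpa⟩

theorem symm (h : G.ReachableAvoiding F u v) : G.ReachableAvoiding F v u := by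
  obtain ⟨p, hp⟩ := h
  exact ⟨p.reverse, by simpa using hp⟩

theorem trans (huv : G.ReachableAvoiding F u v) (hvw : G.ReachableAvoiding F v w) :
    G.ReachableAvoiding F u w := by
  obtain ⟨p, hp⟩ := huv
  obtain ⟨q, hq⟩ := hvw
  refine ⟨p.append q, fun x hx => ?_⟩
  rcases Walk.mem_support_append_iff p q |>.1 hx with hx | hx
  exacts [hp x hx, hq x hx]

theorem of_adj (h : G.Adj u v) (hu : u ∉ F) (hv : v ∉ F) : G.ReachableAvoiding F u v :=
  ⟨h.toWalk, by simp [hu, hv]⟩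

theorem map (φ : G →g H) {F : Set W} (h : G.ReachableAvoiding (φ ⁻¹' F) u v) :
    H.ReachableAvoiding F (φ u) (φ v) := by
  obtain ⟨p, hp⟩ := h
  exact ⟨p.map φ, by simpa using hp⟩

theorem reachable_induce (h : G.ReachableAvoiding F u v) (hu : u ∉ F) (hv : v ∉ F) :
    (G.induce Fᶜ).Reachable ⟨u, hu⟩ ⟨v, hv⟩ := by
  obtain ⟨p, hp⟩ := h
  exact ⟨p.induce Fᶜ hp⟩

end ReachableAvoiding

def IsFaultTolerant (G : SimpleGraph V) (m : ℕ) : Prop :=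
  ∀ F : Set V, F.ncard ≤ m → ∀ u ∉ F, ∀ v ∉ F, G.ReachableAvoiding F u v

theorem IsFaultTolerant.connected_induce_compl {m : ℕ} (hG : G.IsFaultTolerant m) {F : Set V}
    (hF : F.ncard ≤ m) (hne : Fᶜ.Nonempty) : (G.induce Fᶜ).Connected := by
  have : Nonempty (Fᶜ : Set V) := hne.to_subtype
  exact .mk fun ⟨u, hu⟩ ⟨v, hv⟩ => (hG F hF u hu v hv).reachable_induce hu hv

theorem not_connected_induce_compl_neighborSet {v w : V} (hvw : v ≠ w) (h : ¬ G.Adj v w) :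
    ¬ (G.induce (G.neighborSet v)ᶜ).Connected := by
  intro hconn
  have hv : v ∈ (G.neighborSet v)ᶜ := G.loopless.irrefl v
  have hw : w ∈ (G.neighborSet v)ᶜ := h
  have : Nontrivial ((G.neighborSet v)ᶜ : Set V) :=
    ⟨⟨v, hv⟩, ⟨w, hw⟩, fun h => hvw (congrArg Subtype.val h)⟩
  obtain ⟨⟨x, hx⟩, hvx⟩ := hconn.preconnected.exists_adj_of_nontrivial ⟨v, hv⟩
  exact hx hvx

end SimpleGraph

theorem vConn_le_ncard {V : Type*} {G : SimpleGraph V} {S : Set V} (hS : S.Finite)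
    (h : ¬ (G.induce Sᶜ).Connected) : vConn G ≤ S.ncard :=
  Nat.sInf_le ⟨S, hS, rfl, .inl h⟩

theorem le_vConn {V : Type*} [Finite V] {G : SimpleGraph V} {m : ℕ}
    (h : ∀ S : Set V, S.ncard < m → (G.induce Sᶜ).Connected ∧ Sᶜ.Nontrivial) :
    m ≤ vConn G := by
  have hne : {m | ∃ S : Set V, S.Finite ∧ S.ncard = m ∧
      (¬ (G.induce Sᶜ).Connected ∨ ∃ v, Sᶜ = {v})}.Nonempty :=
    ⟨_, Set.univ, Set.toFinite _, rfl, .inl fun hconn => by simpa using hconn.nonempty⟩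
  refine le_csInf hne ?_
  rintro _ ⟨S, -, rfl, hS⟩
  by_contra! hlt
  obtain ⟨hconn, hnt⟩ := h S hlt
  rcases hS with hS | ⟨v, hv⟩
  · exact hS hconn
  · exact hnt.not_subsingleton (hv ▸ Set.subsingleton_singleton)

theorem ZMod.rel_of_rel_add_one {k : ℕ} [NeZero k] {B : Set (ZMod k)} (hB : B.Subsingleton)
    {P : ZMod k → ZMod k → Prop} (refl : ∀ c ∉ B, P c c) (symm : ∀ c d, P c d → P d c)
    (trans : ∀ c d e, d ∉ B → P c d → P d e → P c e)
    (succ : ∀ c ∉ B, c + 1 ∉ B → P c (c + 1)) {a b : ZMod k} (ha : a ∉ B) (hb : b ∉ B) :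
    P a b := by
  have arc : ∀ (t : ℕ) (c : ZMod k), (∀ i ≤ t, c + i ∉ B) → P c (c + t) := by
    intro t c h
    induction t with
    | zero => simpa using refl c (by simpa using h 0 le_rfl)
    | succ t ih =>
      have hlast : c + ((t + 1 : ℕ) : ZMod k) = c + t + 1 := by push_cast; ring
      rw [hlast]
      exact trans _ _ _ (h t t.le_succ) (ih fun i hi => h i (by omega))
        (succ _ (h t t.le_succ) (hlast ▸ h (t + 1) le_rfl))
  rcases hB.eq_empty_or_singleton with rfl | ⟨β, rfl⟩
  · simpa using arc (b - a).val a (by simp)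
  -- going up from `β`, the arc `β + 1, …, β + (k - 1)` contains every vertex but `β`
  have up : ∀ i j : ℕ, 0 < i → i ≤ j → j < k → P (β + i) (β + j) := by
    intro i j hi hij hj
    have hβ : ∀ m ≤ j - i, β + i + m ∉ ({β} : Set (ZMod k)) := by
      intro m hm
      rw [Set.mem_singleton_iff, add_assoc, add_eq_left, ← Nat.cast_add,
        ZMod.natCast_eq_zero_iff]
      exact Nat.not_dvd_of_pos_of_lt (by omega) (by omega)
    simpa [add_assoc, ← Nat.cast_add, Nat.add_sub_cancel' hij] using arc (j - i) (β + i) hβ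
  have hval : ∀ c ∉ ({β} : Set (ZMod k)), 0 < (c - β).val ∧ β + (c - β).val = c := by
    exact fun c hc => ⟨ZMod.val_pos.2 (sub_ne_zero.2 hc), by simp⟩
  obtain ⟨hi, hai⟩ := hval a ha
  obtain ⟨hj, hbj⟩ := hval b hb
  rw [← hai, ← hbj]
  rcases le_total (a - β).val (b - β).val with hij | hji
  · exact up _ _ hi hij (ZMod.val_lt _)
  · exact symm _ _ (up _ _ hj hji (ZMod.val_lt _))

theorem two_mul_two_mul_sub_one_lt_three_pow (n : ℕ) : 2 * (2 * n - 1) < 3 ^ n := by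
  induction n with
  | zero => norm_num
  | succ n ih =>
    have := Nat.one_le_pow n 3 (by norm_num)
    rw [pow_succ]
    omega

section Layer

variable {n : ℕ} {α : Type*}

def layer (F : Set (Fin (n + 1) → α)) (c : α) : Set (Fin n → α) :=
  (fun x => Fin.snoc x c) ⁻¹' F

theorem sum_ncard_layer_le [Finite α] (F : Set (Fin (n + 1) → α)) (s : Finset α) :
    ∑ c ∈ s, (layer F c).ncard ≤ F.ncard := by
  classical
  have := Fintype.ofFinite α
  calc ∑ c ∈ s, (layer F c).ncard
      = (s.sigma fun c => (layer F c).toFinset).card := by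
        simp [Finset.card_sigma, Set.ncard_eq_toFinset_card']
    _ ≤ F.toFinset.card := by
        refine Finset.card_le_card_of_injOn (fun p => Fin.snoc p.2 p.1) ?_ ?_
        · rintro ⟨c, x⟩ hx
          simp only [Finset.coe_sigma, Set.mem_sigma_iff, Finset.mem_coe,
            Set.mem_toFinset] at hx ⊢
          exact hx.2
        · rintro ⟨c, x⟩ - ⟨c', x'⟩ - h
          obtain ⟨rfl, rfl⟩ := Fin.snoc_injective2 h
          rfl
    _ = F.ncard := (Set.ncard_eq_toFinset_card' F).symm

theorem exists_snoc_notMem_of_ncard_layer_add_lt [Finite α] {F : Set (Fin (n + 1) → α)}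
    {c c' : α} (h : (layer F c).ncard + (layer F c').ncard < Nat.card α ^ n) :
    ∃ x, Fin.snoc x c ∉ F ∧ Fin.snoc x c' ∉ F := by
  by_contra! hcover
  have huniv : (Set.univ : Set (Fin n → α)) ⊆ layer F c ∪ layer F c' := fun x _ =>
    or_iff_not_imp_left.2 (hcover x)
  have hle := (Set.ncard_le_ncard huniv (Set.toFinite _)).trans (Set.ncard_union_le _ _)
  rw [Set.ncard_univ, Nat.card_fun, Nat.card_fin] at hle
  omega

end Layer

namespace QCube

variable {n k : ℕ}

def snocHom (c : ZMod k) : QCube n k →g QCube (n + 1) k where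
  toFun x := Fin.snoc x c
  map_rel' := by
    rintro u v ⟨huv, j, hj, hrest⟩
    refine ⟨fun h => huv (Fin.snoc_left_injective (α := fun _ => ZMod k) c h), j.castSucc,
      by simpa using hj, fun i hi => ?_⟩
    induction i using Fin.lastCases with
    | last => simp
    | cast i => simp [hrest i (by rintro rfl; exact hi rfl)]

theorem adj_snoc_snoc_add_one [Nontrivial (ZMod k)] (x : Fin n → ZMod k) (c : ZMod k) :
    (QCube (n + 1) k).Adj (Fin.snoc x c) (Fin.snoc x (c + 1)) := by
  refine ⟨by simp, Fin.last n, .inr (by simp), fun i hi => ?_⟩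
  induction i using Fin.lastCases with
  | last => exact absurd rfl hi
  | cast i => simp

theorem ncard_neighborSet_zero_le : ((QCube n k).neighborSet 0).ncard ≤ 2 * n := by
  have hsub : (QCube n k).neighborSet 0 ⊆
      (fun p : Fin n × ZMod k => Pi.single p.1 p.2) '' (Set.univ ×ˢ {1, -1}) := by
    rintro w ⟨-, j, hj, hrest⟩
    refine ⟨(j, w j), ⟨trivial, ?_⟩, funext fun i => ?_⟩
    · simp only [Set.mem_insert_iff, Set.mem_singleton_iff, Pi.zero_apply] at hj ⊢
      rcases hj with hj | hj
      · exact .inr (by linear_combination -hj)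
      · exact .inl (by linear_combination -hj)
    · by_cases hij : i = j
      · subst hij; simp
      · simp [Pi.single_eq_of_ne hij, ← hrest i hij]
  have hfin : ((Set.univ : Set (Fin n)) ×ˢ ({1, -1} : Set (ZMod k))).Finite :=
    Set.finite_univ.prod (Set.toFinite ({1, -1} : Set (ZMod k)))
  calc ((QCube n k).neighborSet 0).ncard
      ≤ ((Set.univ : Set (Fin n)) ×ˢ ({1, -1} : Set (ZMod k))).ncard :=
        (Set.ncard_le_ncard hsub (hfin.image _)).trans (Set.ncard_image_le hfin)
    _ ≤ n * 2 := by
        rw [Set.ncard_prod, Set.ncard_univ, Nat.card_fin]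
        exact Nat.mul_le_mul_left n ((Set.ncard_insert_le _ _).trans (by simp))
    _ = 2 * n := mul_comm n 2

theorem not_adj_zero_one (hn : 2 ≤ n) : ¬ (QCube n k).Adj 0 1 := by
  rintro ⟨h01, j, -, hrest⟩
  have : Nontrivial (Fin n) := Fin.nontrivial_iff_two_le.2 hn
  obtain ⟨i, hij⟩ := exists_ne j
  exact h01 (funext fun _ => hrest i hij)

variable {F : Set (Fin (n + 1) → ZMod k)}

theorem subsingleton_heavy_layers [NeZero k] (hF : F.ncard ≤ 2 * n + 1) :
    {c : ZMod k | 2 * n - 1 < (layer F c).ncard}.Subsingleton := by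
  intro c (hc : 2 * n - 1 < _) c' (hc' : 2 * n - 1 < _)
  by_contra hne
  have hsum := sum_ncard_layer_le F {c, c'}
  rw [Finset.sum_pair hne] at hsum
  omega

theorem reachableAvoiding_of_light_layer (ih : (QCube n k).IsFaultTolerant (2 * n - 1))
    {c : ZMod k} (hc : (layer F c).ncard ≤ 2 * n - 1) {a b : Fin (n + 1) → ZMod k}
    (ha : a ∉ F) (hb : b ∉ F) (hac : a (Fin.last n) = c) (hbc : b (Fin.last n) = c) :
    (QCube (n + 1) k).ReachableAvoiding F a b := by
  obtain ⟨x, rfl⟩ : ∃ x, snocHom c x = a := ⟨Fin.init a, hac ▸ Fin.snoc_init_self a⟩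
  obtain ⟨y, rfl⟩ : ∃ y, snocHom c y = b := ⟨Fin.init b, hbc ▸ Fin.snoc_init_self b⟩
  exact (ih _ hc x ha y hb).map (snocHom c)

theorem reachableAvoiding_of_light_layers (hk : 3 ≤ k)
    (ih : (QCube n k).IsFaultTolerant (2 * n - 1)) (hF : F.ncard ≤ 2 * n + 1)
    {a b : Fin (n + 1) → ZMod k} (ha : a ∉ F) (hb : b ∉ F)
    (hal : (layer F (a (Fin.last n))).ncard ≤ 2 * n - 1)
    (hbl : (layer F (b (Fin.last n))).ncard ≤ 2 * n - 1) :
    (QCube (n + 1) k).ReachableAvoiding F a b := by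
  have : NeZero k := ⟨by omega⟩
  have : Fact (1 < k) := ⟨by omega⟩
  have bridge : ∀ c c', (layer F c).ncard ≤ 2 * n - 1 → (layer F c').ncard ≤ 2 * n - 1 →
      ∃ x, Fin.snoc x c ∉ F ∧ Fin.snoc x c' ∉ F := by
    intro c c' hc hc'
    refine exists_snoc_notMem_of_ncard_layer_add_lt ?_
    have := two_mul_two_mul_sub_one_lt_three_pow n
    have := Nat.pow_le_pow_left hk n
    rw [Nat.card_zmod]
    omega
  refine ZMod.rel_of_rel_add_one (subsingleton_heavy_layers hF)
    (P := fun c d => ∀ a ∉ F, ∀ b ∉ F, a (Fin.last n) = c → b (Fin.last n) = d →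
      (QCube (n + 1) k).ReachableAvoiding F a b)
    ?refl ?symm ?trans ?succ (not_lt.2 hal) (not_lt.2 hbl) a ha b hb rfl rfl
  case refl =>
    exact fun c hc a ha b hb hac hbc =>
      reachableAvoiding_of_light_layer ih (not_lt.1 hc) ha hb hac hbc
  case symm =>
    exact fun c d h a ha b hb hac hbd => (h b hb a ha hbd hac).symm
  case trans =>
    intro c d e hd hcd hde a ha b hb hac hbe
    obtain ⟨x, hx, -⟩ := bridge d d (not_lt.1 hd) (not_lt.1 hd)
    exact (hcd a ha _ hx hac (by simp)).trans (hde _ hx b hb (by simp) hbe)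
  case succ =>
    intro c hc hc' a ha b hb hac hbc
    obtain ⟨x, hx, hx'⟩ := bridge c (c + 1) (not_lt.1 hc) (not_lt.1 hc')
    have hcross := ReachableAvoiding.of_adj (adj_snoc_snoc_add_one x c) hx hx'
    exact (reachableAvoiding_of_light_layer ih (not_lt.1 hc) ha hx hac (by simp)).trans <|
      hcross.trans (reachableAvoiding_of_light_layer ih (not_lt.1 hc') hx' hb (by simp) hbc)

theorem exists_adj_light_of_heavy (hk : 3 ≤ k) (hF : F.ncard ≤ 2 * n + 1)
    {x : Fin n → ZMod k} {c : ZMod k} (hc : 2 * n - 1 < (layer F c).ncard) :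
    ∃ w ∉ F, (layer F (w (Fin.last n))).ncard ≤ 2 * n - 1 ∧
      (QCube (n + 1) k).Adj (Fin.snoc x c) w := by
  have : NeZero k := ⟨by omega⟩
  have : Fact (1 < k) := ⟨by omega⟩
  have hup : c + 1 ≠ c := by simp
  have hdown : c - 1 ≠ c := by simp
  have hupdown : c + 1 ≠ c - 1 := by
    intro h
    have h2 : ((2 : ℕ) : ZMod k) = 0 := by push_cast; linear_combination h
    have := Nat.le_of_dvd two_pos ((ZMod.natCast_eq_zero_iff 2 k).1 h2)
    omega
  have hlight : ∀ c' ≠ c, (layer F c').ncard ≤ 2 * n - 1 := fun c' hc' =>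
    not_lt.1 fun h => hc' (subsingleton_heavy_layers hF h hc)
  have hout : (layer F (c + 1)).ncard + (layer F (c - 1)).ncard ≤ 1 := by
    have hsum := sum_ncard_layer_le F {c, c + 1, c - 1}
    rw [Finset.sum_insert (by simp [hup.symm, hdown.symm]), Finset.sum_pair hupdown] at hsum
    omega
  by_cases hx : Fin.snoc x (c + 1) ∈ F
  · have hx' : Fin.snoc x (c - 1) ∉ F := fun hx' => by
      have := (Set.ncard_pos (s := layer F (c + 1)) (Set.toFinite _)).2 ⟨x, hx⟩
      have := (Set.ncard_pos (s := layer F (c - 1)) (Set.toFinite _)).2 ⟨x, hx'⟩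
      omega
    have hadj := adj_snoc_snoc_add_one x (c - 1)
    rw [sub_add_cancel] at hadj
    exact ⟨_, hx', by simpa using hlight _ hdown, hadj.symm⟩
  · exact ⟨_, hx, by simpa using hlight _ hup, adj_snoc_snoc_add_one x c⟩

theorem isFaultTolerant_succ (hk : 3 ≤ k) (ih : (QCube n k).IsFaultTolerant (2 * n - 1)) :
    (QCube (n + 1) k).IsFaultTolerant (2 * (n + 1) - 1) := by
  intro F hF u hu v hv
  replace hF : F.ncard ≤ 2 * n + 1 := by omega
  have toLight : ∀ w ∉ F, ∃ w' ∉ F, (layer F (w' (Fin.last n))).ncard ≤ 2 * n - 1 ∧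
      (QCube (n + 1) k).ReachableAvoiding F w w' := by
    intro w hw
    obtain ⟨x, c, rfl⟩ : ∃ x c, Fin.snoc x c = w := ⟨_, _, Fin.snoc_init_self w⟩
    by_cases hc : (layer F c).ncard ≤ 2 * n - 1
    · exact ⟨_, hw, by simpa using hc, .refl hw⟩
    · obtain ⟨w', hw', hl, hadj⟩ := exists_adj_light_of_heavy hk hF (not_le.1 hc)
      exact ⟨w', hw', hl, .of_adj hadj hw hw'⟩
  obtain ⟨u', hu', hu'l, huu'⟩ := toLight u hu
  obtain ⟨v', hv', hv'l, hvv'⟩ := toLight v hv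
  exact huu'.trans <|
    (reachableAvoiding_of_light_layers hk ih hF hu' hv' hu'l hv'l).trans hvv'.symm

-- `2 * 0 - 1 = 0`: the induction starts at the one-vertex cube with no faults.
theorem isFaultTolerant (hk : 3 ≤ k) : ∀ n, (QCube n k).IsFaultTolerant (2 * n - 1)
  | 0 => fun _ _ u hu v _ => Subsingleton.elim u v ▸ .refl hu
  | n + 1 => isFaultTolerant_succ hk (isFaultTolerant hk n)

end QCube

theorem stmt9 (n k : ℕ) (hn : 2 ≤ n) (hk : 3 ≤ k) :
    vConn (QCube n k) = 2 * n := by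
  have : NeZero k := ⟨by omega⟩
  have : Fact (1 < k) := ⟨by omega⟩
  refine le_antisymm ?_ (le_vConn fun S hS => ?_)
  · have h01 : (0 : Fin n → ZMod k) ≠ 1 := fun h => zero_ne_one (congrFun h ⟨0, by omega⟩)
    calc vConn (QCube n k) ≤ ((QCube n k).neighborSet 0).ncard :=
          vConn_le_ncard (Set.toFinite _)
            (not_connected_induce_compl_neighborSet h01 (QCube.not_adj_zero_one hn))
      _ ≤ 2 * n := QCube.ncard_neighborSet_zero_le
  · have hcompl : 1 < Sᶜ.ncard := by
      have hsplit := Set.ncard_add_ncard_compl S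
      rw [Nat.card_fun, Nat.card_zmod, Nat.card_fin] at hsplit
      have := two_mul_two_mul_sub_one_lt_three_pow n
      have := Nat.pow_le_pow_left hk n
      omega
    have hnt : Sᶜ.Nontrivial := Set.one_lt_ncard_iff_nontrivial.1 hcompl
    exact ⟨(QCube.isFaultTolerant hk n).connected_induce_compl (by omega) hnt.nonempty, hnt⟩
end

section
/- Let n ≥ 2 and 0 ≤ ℓ ≤ ⌈n/2⌉. Then for every set U of ℓ vertices of the hypercube Q_n, the survival graph Q_n ⊖ U (the subgraph induced by vertices outside the closed neighborhood N[U]) has vertex connectivity at least max{n − 2ℓ, 0}. -/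
open SimpleGraph

/-!
Deleting a further set `S` of vertices from `Q_n ⊖ U` leaves `Q_n` minus `N[U] ∪ S`, so it is
enough to show that this graph is connected whenever `2|U| + |S| < n`. We induct on `n`, cutting
`Q_n` along a coordinate `i` into two copies of `Q_{n-1}`. In the copy `x_i = c` the removed set
is `N[U_c] ∪ U_{c+1} ∪ S_c`, since a centre on the other side only removes its mirror image.
After making `S` disjoint from `U`, a coordinate separating two points of `U ∪ S` keeps
`2|U_c| + |U_{c+1}| + |S_c| < n - 1` on both sides, so both halves are connected by induction;
and `|N[U] ∪ S| ≤ |U|(n + 1) + |S| < 2^(n-1)` leaves an edge in direction `i` with both ends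
alive, which joins the halves. When no such coordinate exists (then `n ≤ 3` and `|U ∪ S| ≤ 1`),
everything removed lies within distance `n - 2` of one vertex `t`, so every surviving vertex is
equal or adjacent to the antipode `t + 1`.
-/

namespace SimpleGraph

variable {V : Type*} {G : SimpleGraph V}

theorem preconnected_of_forall_reachable (w : V) (h : ∀ v, G.Reachable v w) : G.Preconnected :=
  fun u v => (h u).trans (h v).symm

theorem Preconnected.induce_induce_compl {A : Set V} {S : Set ↥Aᶜ}
    (h : (G.induce (A ∪ Subtype.val '' S)ᶜ).Preconnected) :
    ((G.induce Aᶜ).induce Sᶜ).Preconnected := by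
  refine h.map
    { toFun := fun v =>
        ⟨⟨v.1, fun hA => v.2 (Or.inl hA)⟩, fun hS => v.2 (Or.inr ⟨_, hS, rfl⟩)⟩
      map_rel' := id } ?_
  rintro ⟨⟨v, hA⟩, hS⟩
  refine ⟨⟨v, ?_⟩, rfl⟩
  rintro (hA' | ⟨w, hw, rfl⟩)
  exacts [hA hA', hS hw]

theorem le_vConn_of_forall [Finite V] {k : ℕ}
    (h : ∀ S : Set V, S.ncard < k → 1 < Sᶜ.ncard ∧ (G.induce Sᶜ).Preconnected) :
    k ≤ vConn G := by
  refine le_csInf ⟨_, Set.univ, Set.finite_univ, rfl, Or.inl fun hc => ?_⟩ ?_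
  · obtain ⟨⟨v, hv⟩⟩ := hc.nonempty
    exact hv trivial
  rintro m ⟨S, -, rfl, hbad⟩
  by_contra! hlt
  obtain ⟨hcard, hpre⟩ := h S hlt
  rcases hbad with hdisc | ⟨v, hv⟩
  · have : Nonempty ↥Sᶜ := (Set.nonempty_of_ncard_ne_zero (by omega)).to_subtype
    exact hdisc (Connected.mk hpre)
  · rw [hv, Set.ncard_singleton] at hcard
    exact lt_irrefl _ hcard

end SimpleGraph

theorem ZMod.ne_iff_eq_add_one {a b : ZMod 2} : a ≠ b ↔ a = b + 1 := by
  decide +revert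

section Slice

variable {n : ℕ} {α : Type*}

def slice (i : Fin (n + 1)) (c : α) (T : Set (Fin (n + 1) → α)) : Set (Fin n → α) :=
  {p | i.insertNth c p ∈ T}

theorem slice_union (i : Fin (n + 1)) (c : α) (A B : Set (Fin (n + 1) → α)) :
    slice i c (A ∪ B) = slice i c A ∪ slice i c B := rfl

theorem removeNth_mem_slice {i : Fin (n + 1)} {T : Set (Fin (n + 1) → α)}
    {u : Fin (n + 1) → α} (hu : u ∈ T) : i.removeNth u ∈ slice i (u i) T := by
  rwa [slice, Set.mem_ofPred_eq, Fin.insertNth_self_removeNth]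

theorem exists_mem_iff_exists_mem_slice {i : Fin (n + 1)} {T : Set (Fin (n + 1) → α)}
    {P : (Fin (n + 1) → α) → Prop} :
    (∃ u ∈ T, P u) ↔ ∃ c, ∃ q ∈ slice i c T, P (i.insertNth c q) := by
  constructor
  · rintro ⟨u, hu, hP⟩
    exact ⟨u i, i.removeNth u, removeNth_mem_slice hu, by rwa [Fin.insertNth_self_removeNth]⟩
  · rintro ⟨c, q, hq, hP⟩
    exact ⟨_, hq, hP⟩

theorem ncard_slice_add_ncard_slice_add_one (i : Fin (n + 1)) (c : ZMod 2)
    (T : Set (Fin (n + 1) → ZMod 2)) :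
    (slice i c T).ncard + (slice i (c + 1) T).ncard = T.ncard := by
  let f (c : ZMod 2) (p : Fin n → ZMod 2) : Fin (n + 1) → ZMod 2 := i.insertNth c p
  have hsplit : T = f c '' slice i c T ∪ f (c + 1) '' slice i (c + 1) T := by
    ext v
    refine ⟨fun hv => ?_, by rintro (⟨p, hp, rfl⟩ | ⟨p, hp, rfl⟩) <;> exact hp⟩
    have hv' : f (v i) (i.removeNth v) = v := Fin.insertNth_self_removeNth i v
    by_cases hc : v i = c
    · exact Or.inl ⟨_, hc ▸ removeNth_mem_slice hv, by rw [← hc, hv']⟩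
    · have hc' := ZMod.ne_iff_eq_add_one.1 hc
      exact Or.inr ⟨_, hc' ▸ removeNth_mem_slice hv, by rw [← hc', hv']⟩
  have hdisj : Disjoint (f c '' slice i c T) (f (c + 1) '' slice i (c + 1) T) := by
    rw [Set.disjoint_left]
    rintro _ ⟨p, -, rfl⟩ ⟨q, -, h⟩
    exact ZMod.ne_iff_eq_add_one.2 rfl (by simpa [f] using congrFun h i : c + 1 = c)
  have hinj (c : ZMod 2) : (f c).Injective := fun p q h => by simpa [f] using h
  conv_rhs => rw [hsplit, Set.ncard_union_eq hdisj, Set.ncard_image_of_injective _ (hinj _),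
    Set.ncard_image_of_injective _ (hinj _)]

theorem exists_forall_slice_nonempty {T : Set (Fin (n + 1) → ZMod 2)} (hT : 1 < T.ncard) :
    ∃ i, ∀ c, (slice i c T).Nonempty := by
  obtain ⟨a, ha, b, hb, hab⟩ := (Set.one_lt_ncard).1 hT
  obtain ⟨i, hi⟩ := Function.ne_iff.1 hab
  refine ⟨i, fun c => ?_⟩
  obtain rfl | rfl : c = a i ∨ c = b i :=
    (by decide : ∀ x y z : ZMod 2, x ≠ y → z = x ∨ z = y) _ _ c hi
  exacts [⟨_, removeNth_mem_slice ha⟩, ⟨_, removeNth_mem_slice hb⟩]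

theorem exists_forall_notMem_slice {F : Set (Fin (n + 1) → ZMod 2)} (hF : F.ncard < 2 ^ n)
    (i : Fin (n + 1)) : ∃ p, ∀ c, p ∈ (slice i c F)ᶜ := by
  have hlt : (slice i 0 F ∪ slice i 1 F).ncard < Nat.card (Fin n → ZMod 2) := by
    have := Set.ncard_union_le (slice i 0 F) (slice i 1 F)
    have := ncard_slice_add_ncard_slice_add_one i 0 F
    simp only [zero_add, Nat.card_eq_fintype_card, Fintype.card_fun, ZMod.card,
      Fintype.card_fin] at *
    omega
  have hne : slice i 0 F ∪ slice i 1 F ≠ Set.univ := fun h => by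
    rw [h, Set.ncard_univ] at hlt
    exact lt_irrefl _ hlt
  obtain ⟨p, hp⟩ := (Set.ne_univ_iff_exists_notMem _).1 hne
  refine ⟨p, fun c => ?_⟩
  fin_cases c
  exacts [fun h => hp (Or.inl h), fun h => hp (Or.inr h)]

theorem exists_forall_two_mul_ncard_slice_add_lt {U S : Set (Fin (n + 1) → ZMod 2)}
    (h : 2 * U.ncard + S.ncard < n + 1)
    (hlarge : 2 * U.ncard + S.ncard < n ∨ 1 < (U ∪ S).ncard) :
    ∃ i, ∀ c, 2 * (slice i c U).ncard + (slice i (c + 1) U ∪ slice i c S).ncard < n := by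
  have key (i : Fin (n + 1)) (c : ZMod 2)
      (h' : 2 * U.ncard + S.ncard < n ∨ (slice i (c + 1) (U ∪ S)).Nonempty) :
      2 * (slice i c U).ncard + (slice i (c + 1) U ∪ slice i c S).ncard < n := by
    have hU := ncard_slice_add_ncard_slice_add_one i c U
    have hS := ncard_slice_add_ncard_slice_add_one i c S
    have hcS := Set.ncard_union_le (slice i (c + 1) U) (slice i c S)
    have hcU : (slice i (c + 1) (U ∪ S)).ncard ≤
        (slice i (c + 1) U).ncard + (slice i (c + 1) S).ncard := Set.ncard_union_le _ _
    rcases h' with h' | h'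
    · omega
    · have := (Set.ncard_pos).2 h'
      omega
  rcases hlarge with hlt | hlt
  · exact ⟨0, fun c => key 0 c (Or.inl hlt)⟩
  · obtain ⟨i, hi⟩ := exists_forall_slice_nonempty hlt
    exact ⟨i, fun c => key i c (Or.inr (hi _))⟩

end Slice

theorem Nat.mul_add_lt_two_pow {l s n : ℕ} (h : 2 * l + s ≤ n) (hn : n = 2 → l = 0) :
    l * (n + 2) + s < 2 ^ n := by
  rcases Nat.lt_or_ge n 3 with hn3 | hn3
  · interval_cases n <;> omega
  · have hpow : n * (n + 2) < 2 ^ (n + 1) := by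
      clear h hn
      induction n, hn3 using Nat.le_induction with
      | base => norm_num
      | succ k hk ih => rw [pow_succ]; nlinarith
    rw [pow_succ] at hpow
    nlinarith

namespace QCube

variable {n : ℕ}

theorem adj_iff_hammingDist_eq_one {u v : Fin n → ZMod 2} :
    (QCube n 2).Adj u v ↔ hammingDist u v = 1 := by
  have key : ∀ a b : ZMod 2, (a = b + 1 ∨ a = b - 1) ↔ a ≠ b := by decide
  simp only [QCube, key, hammingDist, Finset.card_eq_one, Finset.eq_singleton_iff_unique_mem,
    Finset.mem_filter, Finset.mem_univ, true_and]
  constructor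
  · rintro ⟨-, j, hj, hrest⟩
    exact ⟨j, hj, fun i hi => by_contra fun h => hi (hrest i h)⟩
  · rintro ⟨j, hj, hrest⟩
    exact ⟨fun h => hj (h ▸ rfl), j, hj, fun i hi => by_contra fun h => hi (hrest i h)⟩

theorem exists_eq_update_of_adj {u v : Fin n → ZMod 2} (h : (QCube n 2).Adj u v) :
    ∃ j, v = Function.update u j (u j + 1) := by
  obtain ⟨-, j, hj, hrest⟩ := h
  refine ⟨j, funext fun k => ?_⟩
  by_cases hk : k = j
  · subst hk
    rw [Function.update_self]
    exact (by decide : ∀ a b : ZMod 2, a = b + 1 ∨ a = b - 1 → b = a + 1) _ _ hj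
  · rw [Function.update_of_ne hk, hrest k hk]

theorem hammingDist_add_hammingDist_add_one (x u : Fin n → ZMod 2) :
    hammingDist x u + hammingDist x (u + 1) = n := by
  have key : ∀ a b : ZMod 2, a ≠ b + 1 ↔ ¬ a ≠ b := by decide
  simp only [hammingDist, Pi.add_apply, Pi.one_apply, key]
  rw [Finset.card_filter_add_card_filter_not, Finset.card_univ, Fintype.card_fin]

theorem hammingDist_insertNth (i : Fin (n + 1)) (c c' : ZMod 2) (p q : Fin n → ZMod 2) :
    hammingDist (i.insertNth c p : Fin (n + 1) → ZMod 2) (i.insertNth c' q) =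
      (if c = c' then 0 else 1) + hammingDist p q := by
  simp only [hammingDist, Finset.card_filter, Fin.sum_univ_succAbove _ i,
    Fin.insertNth_apply_same, Fin.insertNth_apply_succAbove, ite_not]

theorem adj_insertNth_iff {i : Fin (n + 1)} {c c' : ZMod 2} {p q : Fin n → ZMod 2} :
    (QCube (n + 1) 2).Adj (i.insertNth c p) (i.insertNth c' q) ↔
      c = c' ∧ (QCube n 2).Adj p q ∨ c ≠ c' ∧ p = q := by
  rw [adj_iff_hammingDist_eq_one, adj_iff_hammingDist_eq_one, hammingDist_insertNth,
    ← hammingDist_eq_zero]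
  split_ifs <;> simp [*]

theorem ncard_closedNbhd_le (U : Set (Fin n → ZMod 2)) :
    (closedNbhd (QCube n 2) U).ncard ≤ U.ncard * (n + 1) := by
  classical
  let ball (u : Fin n → ZMod 2) : Set (Fin n → ZMod 2) :=
    insert u (Set.range fun j => Function.update u j (u j + 1))
  have hsub : closedNbhd (QCube n 2) U ⊆ ⋃ u ∈ U.toFinset, ball u := by
    rintro v (hv | ⟨u, hu, hadj⟩) <;> simp only [Set.mem_iUnion, Set.mem_toFinset]
    · exact ⟨v, hv, Set.mem_insert v _⟩
    · obtain ⟨j, rfl⟩ := exists_eq_update_of_adj hadj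
      exact ⟨u, hu, Set.mem_insert_of_mem _ ⟨j, rfl⟩⟩
  have hball (u : Fin n → ZMod 2) : (ball u).ncard ≤ n + 1 := by
    refine (Set.ncard_insert_le _ _).trans (Nat.succ_le_succ ?_)
    rw [← Set.image_univ]
    exact (Set.ncard_image_le (Set.toFinite _)).trans (by simp)
  calc (closedNbhd (QCube n 2) U).ncard
      ≤ (⋃ u ∈ U.toFinset, ball u).ncard := Set.ncard_le_ncard hsub
    _ ≤ ∑ u ∈ U.toFinset, (ball u).ncard := Finset.set_ncard_biUnion_le _ _
    _ ≤ ∑ _u ∈ U.toFinset, (n + 1) := Finset.sum_le_sum fun u _ => hball u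
    _ = U.ncard * (n + 1) := by rw [Finset.sum_const, smul_eq_mul, Set.ncard_eq_toFinset_card']

theorem mem_closedNbhd_singleton_iff {x u : Fin n → ZMod 2} :
    x ∈ closedNbhd (QCube n 2) {u} ↔ hammingDist x u ≤ 1 := by
  simp only [closedNbhd, Set.mem_union, Set.mem_singleton_iff, Set.mem_ofPred_eq, exists_eq_left,
    adj_iff_hammingDist_eq_one, hammingDist_comm u x]
  rw [← hammingDist_eq_zero]
  omega

theorem slice_closedNbhd (i : Fin (n + 1)) (c : ZMod 2) (U : Set (Fin (n + 1) → ZMod 2)) :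
    slice i c (closedNbhd (QCube (n + 1) 2) U) =
      closedNbhd (QCube n 2) (slice i c U) ∪ slice i (c + 1) U := by
  ext p
  simp only [slice, closedNbhd, Set.mem_union, Set.mem_ofPred_eq,
    exists_mem_iff_exists_mem_slice (i := i), adj_insertNth_iff]
  constructor
  · rintro (h | ⟨c', q, hq, ⟨rfl, hadj⟩ | ⟨hne, rfl⟩⟩)
    · exact Or.inl (Or.inl h)
    · exact Or.inl (Or.inr ⟨q, hq, hadj⟩)
    · rw [ZMod.ne_iff_eq_add_one.1 hne] at hq
      exact Or.inr hq
  · rintro ((h | ⟨q, hq, hadj⟩) | h)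
    · exact Or.inl h
    · exact Or.inr ⟨c, q, hq, Or.inl ⟨rfl, hadj⟩⟩
    · exact Or.inr ⟨c + 1, p, h, Or.inr ⟨ZMod.ne_iff_eq_add_one.2 rfl, rfl⟩⟩

theorem preconnected_induce_compl_of_antipode {F : Set (Fin n → ZMod 2)} (t : Fin n → ZMod 2)
    (hF : ∀ x ∉ F, n ≤ hammingDist x t + 1) (ht : t + 1 ∉ F) :
    ((QCube n 2).induce Fᶜ).Preconnected := by
  refine preconnected_of_forall_reachable ⟨t + 1, ht⟩ fun ⟨x, hx⟩ => ?_
  have hsum := hammingDist_add_hammingDist_add_one x t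
  obtain h | h : hammingDist x (t + 1) = 0 ∨ hammingDist x (t + 1) = 1 := by
    have := hF x hx
    omega
  · obtain rfl := hammingDist_eq_zero.1 h
    rfl
  · exact Adj.reachable (adj_iff_hammingDist_eq_one.2 h)

theorem preconnected_induce_compl_of_slices {F : Set (Fin (n + 1) → ZMod 2)} (i : Fin (n + 1))
    (hslice : ∀ c, ((QCube n 2).induce (slice i c F)ᶜ).Preconnected)
    (p : Fin n → ZMod 2) (hp : ∀ c, p ∈ (slice i c F)ᶜ) :
    ((QCube (n + 1) 2).induce Fᶜ).Preconnected := by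
  let lift (c : ZMod 2) : (QCube n 2).induce (slice i c F)ᶜ →g (QCube (n + 1) 2).induce Fᶜ :=
    { toFun := fun q => ⟨i.insertNth c q.1, q.2⟩
      map_rel' := fun h => adj_insertNth_iff.2 (Or.inl ⟨rfl, h⟩) }
  have hcross (c : ZMod 2) :
      ((QCube (n + 1) 2).induce Fᶜ).Reachable (lift c ⟨p, hp c⟩) (lift 0 ⟨p, hp 0⟩) := by
    by_cases hc : c = 0
    · subst hc
      rfl
    · exact Adj.reachable (adj_insertNth_iff.2 (Or.inr ⟨hc, rfl⟩))
  refine preconnected_of_forall_reachable (lift 0 ⟨p, hp 0⟩) fun x => ?_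
  have hx : x = lift (x.1 i) ⟨i.removeNth x.1, removeNth_mem_slice (T := Fᶜ) x.2⟩ :=
    Subtype.ext (Fin.insertNth_self_removeNth i x.1).symm
  rw [hx]
  exact ((hslice _ _ _).map (lift _)).trans (hcross _)

theorem preconnected_induce_compl_of_ncard_le_one {U S : Set (Fin (n + 1) → ZMod 2)}
    (hUS : Disjoint U S) (htight : 2 * U.ncard + S.ncard = n) (hsmall : (U ∪ S).ncard ≤ 1) :
    ((QCube (n + 1) 2).induce (closedNbhd (QCube (n + 1) 2) U ∪ S)ᶜ).Preconnected := by
  rw [Set.ncard_union_eq hUS] at hsmall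
  obtain hU | hU : U.ncard = 0 ∨ U.ncard = 1 := by omega
  · obtain rfl := (Set.ncard_eq_zero).1 hU
    have hN : closedNbhd (QCube (n + 1) 2) ∅ = ∅ := by simp [closedNbhd]
    rw [hN, Set.empty_union]
    obtain hS | hS : S.ncard = 0 ∨ S.ncard = 1 := by omega
    · obtain rfl := (Set.ncard_eq_zero).1 hS
      exact preconnected_induce_compl_of_antipode 0 (by omega) (Set.notMem_empty _)
    · obtain ⟨s, rfl⟩ := (Set.ncard_eq_one).1 hS
      refine preconnected_induce_compl_of_antipode s (fun x hx => ?_) ?_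
      · have := hammingDist_ne_zero.2 hx
        omega
      · exact fun h => ZMod.ne_iff_eq_add_one.2 rfl (congrFun (Set.mem_singleton_iff.1 h) 0)
  · obtain ⟨u, rfl⟩ := (Set.ncard_eq_one).1 hU
    obtain rfl := (Set.ncard_eq_zero).1 (show S.ncard = 0 by omega)
    rw [Set.union_empty]
    refine preconnected_induce_compl_of_antipode u (fun x hx => ?_) ?_
    · rw [mem_closedNbhd_singleton_iff] at hx
      omega
    · have := hammingDist_add_hammingDist_add_one (u + 1) u
      rw [hammingDist_self, add_zero] at this
      rw [mem_closedNbhd_singleton_iff]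
      omega

theorem preconnected_induce_compl_closedNbhd_union (N : ℕ) (U S : Set (Fin N → ZMod 2))
    (h : 2 * U.ncard + S.ncard < N) :
    ((QCube N 2).induce (closedNbhd (QCube N 2) U ∪ S)ᶜ).Preconnected := by
  induction N with
  | zero => omega
  | succ n ih =>
  wlog hUS : Disjoint U S generalizing S
  · have hS : (S \ closedNbhd (QCube (n + 1) 2) U).ncard ≤ S.ncard :=
      Set.ncard_le_ncard Set.sdiff_subset
    rw [← Set.union_sdiff_self]
    exact this _ (by omega) (Set.disjoint_sdiff_right.mono_left Set.subset_union_left)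
  by_cases hsmall : 2 * U.ncard + S.ncard = n ∧ (U ∪ S).ncard ≤ 1
  · exact preconnected_induce_compl_of_ncard_le_one hUS hsmall.1 hsmall.2
  have hlarge : 2 * U.ncard + S.ncard < n ∨ 1 < (U ∪ S).ncard := by omega
  obtain ⟨i, hi⟩ := exists_forall_two_mul_ncard_slice_add_lt h hlarge
  have hF : (closedNbhd (QCube (n + 1) 2) U ∪ S).ncard < 2 ^ n := by
    have hunion := Set.ncard_union_le U S
    calc (closedNbhd (QCube (n + 1) 2) U ∪ S).ncard
        ≤ (closedNbhd (QCube (n + 1) 2) U).ncard + S.ncard := Set.ncard_union_le _ _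
      _ ≤ U.ncard * (n + 2) + S.ncard := by gcongr; exact ncard_closedNbhd_le U
      _ < 2 ^ n := Nat.mul_add_lt_two_pow (by omega) (by omega)
  obtain ⟨p, hp⟩ := exists_forall_notMem_slice hF i
  refine preconnected_induce_compl_of_slices i (fun c => ?_) p hp
  rw [slice_union, slice_closedNbhd, Set.union_assoc]
  exact ih _ _ (hi c)

end QCube

theorem stmt10_general (n ℓ : ℕ)
    (U : Set (Fin n → ZMod 2)) (hU : U.ncard = ℓ) :
    n - 2 * ℓ ≤ vConn (survival (QCube n 2) U) := by
  refine le_vConn_of_forall fun S hS => ⟨?_, ?_⟩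
  · have hA := QCube.ncard_closedNbhd_le U
    have hcount : ℓ * (n + 2) + (S.ncard + 1) < 2 ^ n :=
      Nat.mul_add_lt_two_pow (by omega) (by omega)
    have hcompl := Set.ncard_add_ncard_compl S
    have hAc := Set.ncard_add_ncard_compl (closedNbhd (QCube n 2) U)
    simp only [Nat.card_coe_set_eq, Nat.card_eq_fintype_card, Fintype.card_fun, ZMod.card,
      Fintype.card_fin] at hcompl hAc
    nlinarith
  · have hbudget : 2 * U.ncard + (Subtype.val '' S).ncard < n := by
      rw [Set.ncard_image_of_injective _ Subtype.val_injective]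
      omega
    exact (QCube.preconnected_induce_compl_closedNbhd_union n U _ hbudget).induce_induce_compl

theorem stmt10 (n ℓ : ℕ) (hn : 2 ≤ n) (hl : ℓ ≤ (n + 1) / 2)
    (U : Set (Fin n → ZMod 2)) (hU : U.ncard = ℓ) :
    n - 2 * ℓ ≤ vConn (survival (QCube n 2) U) :=
  stmt10_general n ℓ U hU
end

section
/- Let k ≥ 3. For any single vertex v of the k-ary 2-cube Q_2^k (the k×k wrap-around torus), the graph obtained by deleting v and all its neighbors is 2-connected. -/
open SimpleGraph

/-! The vertices that differ from `v` in both coordinates form a grid, the product of two paths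
(each cycle `ZMod k` minus the coordinate of `v`). This grid stays connected after deleting any
vertex `w`: choose a grid vertex `t` sharing no coordinate with `w`, which exists as `k ≥ 3`; every
other grid vertex `x` reaches `t` along whichever of its two lines misses `w` and then along the
line through `t` in the other direction. A surviving vertex on one of the two axes through `v`
has two grid neighbours, obtained by shifting its on-axis coordinate by `±1`; they are distinct
as `k ≥ 3`, so one of them is not `w`. Hence the survival graph stays connected after deleting
any vertex, and it has more than two vertices. -/

lemma Fin.eq_or_eq_of_ne {i j : Fin 2} (hij : i ≠ j) (l : Fin 2) : l = i ∨ l = j := by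
  omega

lemma ZMod.exists_ne_ne {k : ℕ} (hk : 3 ≤ k) (a b : ZMod k) : ∃ r, r ≠ a ∧ r ≠ b := by
  have : NeZero k := ⟨by omega⟩
  have hcard : ({a, b} : Finset (ZMod k)).card < (Finset.univ : Finset (ZMod k)).card := by
    rw [Finset.card_univ, ZMod.card]
    exact Finset.card_le_two.trans_lt (by omega)
  obtain ⟨r, -, hr⟩ := Finset.exists_mem_notMem_of_card_lt_card hcard
  simp only [Finset.mem_insert, Finset.mem_singleton, not_or] at hr
  exact ⟨r, hr⟩

namespace SimpleGraph

variable {V : Type*} {G : SimpleGraph V}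

lemma induce_connected_of_forall_exists_adj {s t : Set V} (hs : (G.induce s).Connected)
    (hst : s ⊆ t) (ht : ∀ y ∈ t, y ∉ s → ∃ x ∈ s, G.Adj x y) : (G.induce t).Connected := by
  obtain ⟨⟨u, hu⟩⟩ := hs.nonempty
  refine G.induce_connected_of_patches u (hst hu) fun {y} hy => ?_
  by_cases hys : y ∈ s
  · exact ⟨s, hst, hu, hys, hs.preconnected _ _⟩
  obtain ⟨x, hx, hxy⟩ := ht y hy hys
  have hxy_conn := induce_union_connected hs.preconnected
    (induce_pair_connected_of_adj hxy).preconnected ⟨x, hx, Set.mem_insert x {y}⟩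
  exact ⟨s ∪ {x, y}, Set.union_subset hst (Set.insert_subset (hst hx) (by simpa using hy)),
    Or.inl hu, Or.inr (by simp), hxy_conn.preconnected _ _⟩

lemma connected_induce_induce_compl_singleton {s : Set V} {w : s}
    (h : (G.induce (s \ {w.1})).Connected) : ((G.induce s).induce {w}ᶜ).Connected := by
  let f : G.induce (s \ {w.1}) →g (G.induce s).induce {w}ᶜ :=
    ⟨fun x => ⟨⟨x, x.2.1⟩, fun hx => x.2.2 (congrArg Subtype.val hx)⟩, id⟩
  exact h.map f fun ⟨⟨y, hy⟩, hyw⟩ => ⟨⟨y, hy, fun h => hyw (Subtype.ext h)⟩, rfl⟩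

lemma two_le_vConn [Finite V] (hV : 2 < Nat.card V) (hG : G.Connected)
    (hGw : ∀ w, (G.induce {w}ᶜ).Connected) : 2 ≤ vConn G := by
  refine le_csInf ⟨Nat.card V, Set.univ, Set.toFinite _, Set.ncard_univ V,
    Or.inl fun h => h.nonempty.some.2 trivial⟩ ?_
  rintro m ⟨S, hSfin, rfl, hbad⟩
  by_contra! hS
  rcases hbad with hdis | ⟨x, hx⟩
  · rcases (Set.ncard_le_one_iff_eq hSfin).1 (by omega) with rfl | ⟨w, rfl⟩
    · rw [Set.compl_empty] at hdis
      exact hdis ((induceUnivIso G).connected_iff.2 hG)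
    · exact hdis (hGw w)
  · have hcard := Set.ncard_add_ncard_compl S
    rw [hx, Set.ncard_singleton] at hcard
    omega

end SimpleGraph

namespace QCube

open Function

variable {n k : ℕ}

lemma adj_update_add_one (h : (1 : ZMod k) ≠ 0) (x : Fin n → ZMod k) (i : Fin n) (b : ZMod k) :
    (QCube n k).Adj (update x i b) (update x i (b + 1)) := by
  refine ⟨fun he => h ?_, i, Or.inr (by simp), fun l hl => by simp [hl]⟩
  simpa using congrFun he i

def lineAvoiding (x : Fin n → ZMod k) (i : Fin n) (c : ZMod k) : Set (Fin n → ZMod k) :=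
  update x i '' {c}ᶜ

/-- A cycle minus a vertex is a path: `j ↦ c + (j + 1)` maps `pathGraph (k - 1)` onto it. -/
lemma connected_induce_lineAvoiding (hk : 2 ≤ k) (x : Fin n → ZMod k) (i : Fin n)
    (c : ZMod k) : ((QCube n k).induce (lineAvoiding x i c)).Connected := by
  obtain ⟨m, rfl⟩ : ∃ m, k = m + 2 := ⟨k - 2, by omega⟩
  have : Fact (1 < m + 2) := ⟨by omega⟩
  let p : ℕ → Fin n → ZMod (m + 2) := fun j => update x i (c + ((j + 1 : ℕ) : ZMod (m + 2)))
  have hp : ∀ j : Fin (m + 1), p j ∈ lineAvoiding x i c := fun j => by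
    refine ⟨_, fun h => ?_, rfl⟩
    have hdvd := (ZMod.natCast_eq_zero_iff _ _).1 (add_eq_left.1 h)
    exact absurd (Nat.le_of_dvd (by omega) hdvd) (by omega)
  have hstep : ∀ j, (QCube n (m + 2)).Adj (p j) (p (j + 1)) := fun j => by
    have := adj_update_add_one one_ne_zero x i (c + ((j + 1 : ℕ) : ZMod (m + 2)))
    simpa only [p, Nat.cast_add, Nat.cast_one, add_assoc] using this
  let f : pathGraph (m + 1) →g (QCube n (m + 2)).induce (lineAvoiding x i c) :=
    ⟨fun j => ⟨p j, hp j⟩, fun {a b} hab => by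
      change (QCube n (m + 2)).Adj (p a) (p b)
      rcases pathGraph_adj.1 hab with h | h
      · rw [← h]; exact hstep a
      · rw [← h]; exact (hstep b).symm⟩
  refine (pathGraph_connected m).map f ?_
  rintro ⟨_, b, hb, rfl⟩
  have hval : 0 < (b - c).val := ZMod.val_pos.2 (sub_ne_zero.2 hb)
  refine ⟨⟨(b - c).val - 1, by have := ZMod.val_lt (b - c); omega⟩, Subtype.ext ?_⟩
  change update x i (c + (((b - c).val - 1 + 1 : ℕ) : ZMod (m + 2))) = update x i b
  rw [Nat.sub_add_cancel hval, ZMod.natCast_zmod_val, add_sub_cancel]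

def offAxis (v : Fin n → ZMod k) : Set (Fin n → ZMod k) := {x | ∀ i, x i ≠ v i}

lemma offAxis_subset_compl_closedNbhd (hn : 2 ≤ n) (v : Fin n → ZMod k) :
    offAxis v ⊆ (closedNbhd (QCube n k) {v})ᶜ := by
  have : Nontrivial (Fin n) := Fin.nontrivial_iff_two_le.2 hn
  rintro x hx (rfl | ⟨_, rfl, -, j, -, hj⟩)
  · exact hx ⟨0, by omega⟩ rfl
  · obtain ⟨i, hi⟩ := exists_ne j
    exact hx i (hj i hi).symm

lemma exists_connected_row_union_column (hk : 2 ≤ k) {v w x t : Fin 2 → ZMod k} {i j : Fin 2}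
    (hij : i ≠ j) (hx : x ∈ offAxis v) (ht : t ∈ offAxis v) (hxw : x j ≠ w j)
    (htw : t i ≠ w i) :
    ∃ s ⊆ offAxis v \ {w}, t ∈ s ∧ x ∈ s ∧ ((QCube 2 k).induce s).Connected := by
  refine ⟨lineAvoiding x i (v i) ∪ lineAvoiding t j (v j), ?_,
    Or.inr ⟨t j, ht j, update_eq_self j t⟩, Or.inl ⟨x i, hx i, update_eq_self i x⟩,
    induce_union_connected (connected_induce_lineAvoiding hk x i _).preconnected
      (connected_induce_lineAvoiding hk t j _).preconnected
      ⟨update x i (t i), ⟨t i, ht i, rfl⟩, x j, hx j, ?_⟩⟩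
  · rintro _ (⟨b, hb, rfl⟩ | ⟨b, hb, rfl⟩)
    · refine ⟨fun l => ?_, fun h => hxw (by rw [← h, update_of_ne hij.symm])⟩
      rcases Fin.eq_or_eq_of_ne hij l with rfl | rfl
      · simpa using hb
      · simpa [update_of_ne hij.symm] using hx l
    · refine ⟨fun l => ?_, fun h => htw (by rw [← h, update_of_ne hij])⟩
      rcases Fin.eq_or_eq_of_ne hij l with rfl | rfl
      · simpa [update_of_ne hij] using ht l
      · simpa using hb
  · funext l
    rcases Fin.eq_or_eq_of_ne hij l with rfl | rfl
    · simp [update_of_ne hij]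
    · simp [update_of_ne hij.symm]

lemma connected_induce_offAxis_diff (hk : 3 ≤ k) (v w : Fin 2 → ZMod k) :
    ((QCube 2 k).induce (offAxis v \ {w})).Connected := by
  obtain ⟨r, hrv, hrw⟩ := ZMod.exists_ne_ne hk (v 0) (w 0)
  obtain ⟨c, hcv, hcw⟩ := ZMod.exists_ne_ne hk (v 1) (w 1)
  have ht : ![r, c] ∈ offAxis v := fun i => by fin_cases i <;> simpa
  refine induce_connected_of_patches ![r, c] ⟨ht, fun h => hrw (congrFun h 0)⟩ fun {x} hx => ?_
  obtain ⟨j, hj⟩ : ∃ j, x j ≠ w j := Function.ne_iff.1 hx.2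
  obtain ⟨s, hs, hts, hxs, hconn⟩ : ∃ s ⊆ offAxis v \ {w}, ![r, c] ∈ s ∧ x ∈ s ∧
      ((QCube 2 k).induce s).Connected := by
    fin_cases j
    · exact exists_connected_row_union_column (by omega) (i := 1) (by decide) hx.1 ht hj hcw
    · exact exists_connected_row_union_column (by omega) (i := 0) (by decide) hx.1 ht hj hrw
  exact ⟨s, hs, hts, hxs, hconn.preconnected _ _⟩

lemma exists_adj_offAxis_diff (hk : 3 ≤ k) {v y : Fin 2 → ZMod k} (w : Fin 2 → ZMod k)
    (hyv : y ≠ v) (hy : y ∉ offAxis v) : ∃ x ∈ offAxis v \ {w}, (QCube 2 k).Adj x y := by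
  have : Fact (1 < k) := ⟨by omega⟩
  have : Fact (2 < k) := ⟨by omega⟩
  obtain ⟨i, hi⟩ : ∃ i, y i = v i := by
    simpa only [offAxis, Set.mem_ofPred_eq, not_forall, not_not] using hy
  obtain ⟨j, hj⟩ := Function.ne_iff.1 hyv
  have hij : i ≠ j := by rintro rfl; exact hj hi
  have hmem : ∀ d : ZMod k, d ≠ 0 → update y i (y i + d) ∈ offAxis v := fun d hd l => by
    rcases Fin.eq_or_eq_of_ne hij l with rfl | rfl
    · simpa [← hi] using hd
    · simpa [update_of_ne hij.symm] using hj
  have hup : (QCube 2 k).Adj (update y i (y i + 1)) y := by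
    simpa using (adj_update_add_one one_ne_zero y i (y i)).symm
  have hdown : (QCube 2 k).Adj (update y i (y i + -1)) y := by
    simpa using adj_update_add_one one_ne_zero y i (y i + -1)
  by_cases hw : update y i (y i + 1) = w
  · refine ⟨_, ⟨hmem _ (neg_ne_zero.2 one_ne_zero), fun h => ?_⟩, hdown⟩
    exact ZMod.neg_one_ne_one (n := k) (by simpa using congrFun (h.trans hw.symm) i)
  · exact ⟨_, ⟨hmem _ one_ne_zero, hw⟩, hup⟩

theorem connected_induce_compl_closedNbhd_diff (hk : 3 ≤ k) (v w : Fin 2 → ZMod k) :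
    ((QCube 2 k).induce ((closedNbhd (QCube 2 k) {v})ᶜ \ {w})).Connected :=
  induce_connected_of_forall_exists_adj (connected_induce_offAxis_diff hk v w)
    (Set.sdiff_subset_sdiff_left (offAxis_subset_compl_closedNbhd le_rfl v))
    fun _ hy hys => exists_adj_offAxis_diff hk w (fun h => hy.1 (Or.inl h))
      fun h => hys ⟨h, hy.2⟩

lemma two_lt_ncard_offAxis (hk : 3 ≤ k) (v : Fin 2 → ZMod k) : 2 < (offAxis v).ncard := by
  have : NeZero k := ⟨by omega⟩
  have : Fact (1 < k) := ⟨by omega⟩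
  have : Fact (2 < k) := ⟨by omega⟩
  have h1 : (-1 : ZMod k) ≠ 1 := ZMod.neg_one_ne_one
  have hmem : ∀ a b : ZMod k, a ≠ 0 → b ≠ 0 → v + ![a, b] ∈ offAxis v := fun a b ha hb i => by
    fin_cases i <;> simpa
  refine (Set.two_lt_ncard_iff (Set.toFinite _)).2 ⟨v + ![1, 1], v + ![1, -1], v + ![-1, 1],
    hmem _ _ one_ne_zero one_ne_zero, hmem _ _ one_ne_zero (neg_ne_zero.2 one_ne_zero),
    hmem _ _ (neg_ne_zero.2 one_ne_zero) one_ne_zero, fun h => ?_, fun h => ?_, fun h => ?_⟩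
  · exact h1 (by simpa using (congrFun h 1).symm)
  · exact h1 (by simpa using (congrFun h 0).symm)
  · exact h1 (by simpa using (congrFun h 0).symm)

end QCube

theorem stmt12 (k : ℕ) (hk : 3 ≤ k) (v : Fin 2 → ZMod k) :
    2 ≤ vConn (survival (QCube 2 k) {v}) := by
  have : NeZero k := ⟨by omega⟩
  have hv : v ∈ closedNbhd (QCube 2 k) {v} := Or.inl rfl
  refine two_le_vConn ?_ ?_ fun w => connected_induce_induce_compl_singleton
    (QCube.connected_induce_compl_closedNbhd_diff hk v w)
  · rw [Nat.card_coe_set_eq]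
    exact (QCube.two_lt_ncard_offAxis hk v).trans_le
      (Set.ncard_le_ncard (QCube.offAxis_subset_compl_closedNbhd le_rfl v))
  · have h := QCube.connected_induce_compl_closedNbhd_diff hk v v
    rwa [Set.sdiff_singleton_eq_self (Set.notMem_compl_iff.2 hv)] at h
end

section
/- For n ≥ 2 and k ≥ 3, the neighbor connectivity of the k-ary n-cube Q_n^k equals n. -/
open SimpleGraph

/-!
A set of `n` vertices can isolate `0`: the vertices `eᵢ - eᵢ₊₁` (indices mod `n`) are not
adjacent to `0`, but every neighbour `±eᵢ` of `0` is adjacent to one of them.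

Conversely, fewer than `n` closed neighbourhoods never disconnect `Q_n^k`. More generally,
removing `N[B]` and a set `W` of single vertices with `2|B| + |W| < 2m` leaves `Q_m^k`
connected. This goes by induction on `m`, cutting `Q_{m+1}^k` into the `k` layers of constant
first coordinate, each a copy of `Q_m^k`. A ball centred in a layer is a ball of that layer, and a
ball centred in an adjacent layer leaves a single vertex, so the layer `j` carries the cost
`2aⱼ + aⱼ₋₁ + aⱼ₊₁ + wⱼ` (with `aⱼ`, `wⱼ` the numbers of centres and of points at height `j`).
Layers of cost `< 2m` are connected by induction, and two consecutive ones are joined by a vertical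
edge (by counting). Since the total budget is at most `2m + 1`, a layer of cost `≥ 2m` leaves at
most one unit of budget elsewhere; hence such layers are at most two consecutive ones, and every
survivor in one of them has a surviving vertical neighbour in a cheap layer.

Finally `Q_n^k` has no `K₄` while at least four vertices survive, so what survives is not
complete either.
-/

theorem survivalBad_of_isolated {V : Type*} {G : SimpleGraph V} {U : Set V} {v : V}
    (hv : v ∉ closedNbhd G U) (hnbr : ∀ w, G.Adj v w → w ∈ closedNbhd G U) : SurvivalBad G U := by
  by_cases hw : ∃ w ∈ (closedNbhd G U)ᶜ, w ≠ v
  · obtain ⟨w, hw, hwv⟩ := hw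
    refine Or.inl ⟨Set.nonempty_iff_ne_empty.1 ⟨w, hw⟩, fun hconn => ?_⟩
    obtain ⟨p⟩ := hconn.preconnected ⟨v, hv⟩ ⟨w, hw⟩
    have hp : ¬ p.Nil := Walk.not_nil_of_ne fun h => hwv (congrArg Subtype.val h).symm
    exact p.snd.2 (hnbr _ (p.adj_snd hp))
  · push Not at hw
    exact Or.inr (Or.inl fun a ha b hb hab => (hab ((hw a ha).trans (hw b hb).symm)).elim)

open Finset

namespace QCube

variable {m k : ℕ}

lemma natCast_ne_zero_of_pos_of_lt {t : ℕ} (h0 : 0 < t) (hk : t < k) : (t : ZMod k) ≠ 0 := by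
  rw [Ne, ZMod.natCast_eq_zero_iff]
  exact Nat.not_dvd_of_pos_of_lt h0 hk

lemma two_ne_zero_of_three_le (hk : 3 ≤ k) : (2 : ZMod k) ≠ 0 := by
  exact_mod_cast natCast_ne_zero_of_pos_of_lt (t := 2) two_pos hk

lemma sub_one_ne_add_one (hk : 3 ≤ k) (j : ZMod k) : j - 1 ≠ j + 1 := fun h =>
  two_ne_zero_of_three_le hk (by linear_combination -h)

lemma two_mul_sq_add_two_mul_le_three_pow (hm : 3 ≤ m) : 2 * m ^ 2 + 2 * m ≤ 3 ^ m := by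
  induction m, hm using Nat.le_induction with
  | base => norm_num
  | succ m hm ih => rw [pow_succ 3 m]; nlinarith

def ball (u : Fin m → ZMod k) : Finset (Fin m → ZMod k) :=
  insert u (univ.image (u + Pi.single · 1) ∪ univ.image (u - Pi.single · 1))

lemma card_ball_le (u : Fin m → ZMod k) : #(ball u) ≤ 2 * m + 1 := by
  calc #(ball u) ≤ #(univ.image (u + Pi.single · 1)) + #(univ.image (u - Pi.single · 1)) + 1 :=
        (card_insert_le _ _).trans (Nat.add_le_add_right (card_union_le _ _) 1)
    _ ≤ m + m + 1 := by
        gcongr <;> exact card_image_le.trans (by simp)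
    _ = 2 * m + 1 := by ring

lemma notMem_ball_of_ne_of_ne {b c : Fin m → ZMod k} {i i' : Fin m} (hii' : i ≠ i')
    (hi : b i ≠ c i) (hi' : b i' ≠ c i') : b ∉ ball c := by
  simp only [ball, mem_insert, mem_union, mem_image, mem_univ, true_and, not_or, not_exists]
  refine ⟨fun h => hi (by rw [h]), fun l h => ?_, fun l h => ?_⟩ <;>
  · subst h
    by_cases hl : l = i
    · subst hl; exact hi' (by simp [hii'.symm])
    · exact hi (by simp [Ne.symm hl])

section Adjacency

variable [Fact (1 < k)]

theorem adj_iff {x y : Fin m → ZMod k} :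
    (QCube m k).Adj x y ↔ ∃ i, y = x + Pi.single i 1 ∨ y = x - Pi.single i 1 := by
  constructor
  · rintro ⟨-, i, hi, hrest⟩
    refine ⟨i, ?_⟩
    rcases hi with hi | hi
    · right
      funext l
      by_cases hl : l = i
      · subst hl; simp [hi]
      · simp [hl, hrest l hl]
    · left
      funext l
      by_cases hl : l = i
      · subst hl; simp [hi]
      · simp [hl, hrest l hl]
  · rintro ⟨i, rfl | rfl⟩
    · exact ⟨fun h => by simpa using congrFun h i, i, Or.inr (by simp),
        fun l hl => by simp [hl]⟩
    · exact ⟨fun h => by simpa using (congrFun h i).symm, i, Or.inl (by simp),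
        fun l hl => by simp [hl]⟩

theorem adj_cons_cons_iff {a a' : ZMod k} {b b' : Fin m → ZMod k} :
    (QCube (m + 1) k).Adj (Fin.cons a b) (Fin.cons a' b') ↔
      ((a = a' + 1 ∨ a = a' - 1) ∧ b = b') ∨ (a = a' ∧ (QCube m k).Adj b b') := by
  have hne : (a = a' + 1 ∨ a = a' - 1) → a ≠ a' := by
    rintro (h | h) rfl
    · simp at h
    · simpa using h.symm
  simp only [QCube, ne_eq, Fin.exists_fin_succ, Fin.forall_fin_succ, Fin.cons_zero, Fin.cons_succ,
    Fin.succ_ne_zero, Fin.succ_inj, (Fin.succ_ne_zero _).symm, not_true_eq_false,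
    IsEmpty.forall_iff, true_and, not_false_eq_true, forall_const, funext_iff]
  constructor
  · rintro ⟨hne', h | ⟨i, hi, rfl, hrest⟩⟩
    · exact Or.inl h
    · exact Or.inr ⟨rfl, fun h => hne' ⟨rfl, h⟩, i, hi, hrest⟩
  · rintro (h | ⟨rfl, hb, i, hi, hrest⟩)
    · exact ⟨fun h' => hne h.1 h'.1, Or.inl h⟩
    · exact ⟨fun h' => hb h'.2, Or.inr ⟨i, hi, rfl, hrest⟩⟩

lemma mem_closedNbhd_iff {U : Set (Fin m → ZMod k)} {x : Fin m → ZMod k} :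
    x ∈ closedNbhd (QCube m k) U ↔ ∃ u ∈ U, x ∈ ball u := by
  simp only [closedNbhd, Set.mem_union, Set.mem_ofPred_eq, ball, mem_insert, mem_union, mem_image,
    mem_univ, true_and, adj_iff]
  constructor
  · rintro (hx | ⟨u, hu, i, h | h⟩)
    · exact ⟨x, hx, Or.inl rfl⟩
    · exact ⟨u, hu, Or.inr (Or.inl ⟨i, h.symm⟩)⟩
    · exact ⟨u, hu, Or.inr (Or.inr ⟨i, h.symm⟩)⟩
  · rintro ⟨u, hu, rfl | ⟨i, rfl⟩ | ⟨i, rfl⟩⟩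
    · exact Or.inl hu
    · exact Or.inr ⟨u, hu, i, Or.inl rfl⟩
    · exact Or.inr ⟨u, hu, i, Or.inr rfl⟩

lemma exists_ne_and_eq_of_adj {x y : Fin m → ZMod k} (h : (QCube m k).Adj x y) :
    ∃ i, y i ≠ x i ∧ ∀ l ≠ i, y l = x l := by
  obtain ⟨i, rfl | rfl⟩ := adj_iff.1 h <;>
    exact ⟨i, by simp, fun l hl => by simp [hl]⟩

theorem cliqueFree_four : (QCube m k).CliqueFree 4 := by
  intro s hs
  obtain ⟨a, ha⟩ : s.Nonempty := card_pos.1 (by rw [hs.card_eq]; norm_num)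
  have hadj : ∀ y ∈ s.erase a, ∀ y' ∈ s.erase a, y ≠ y' → (QCube m k).Adj y y' :=
    fun y hy y' hy' hne => hs.isClique (mem_of_mem_erase hy) (mem_of_mem_erase hy') hne
  have hcard : #(s.erase a) = 3 := by rw [card_erase_of_mem ha, hs.card_eq]
  obtain ⟨y₁, hy₁⟩ : (s.erase a).Nonempty := card_pos.1 (by omega)
  obtain ⟨i, hi, hrest⟩ := exists_ne_and_eq_of_adj
    (hs.isClique ha (mem_of_mem_erase hy₁) (ne_of_mem_erase hy₁).symm)
  have key : ∀ y ∈ s.erase a, y = a + Pi.single i 1 ∨ y = a - Pi.single i 1 := by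
    intro y hy
    obtain ⟨j, hj⟩ := adj_iff.1 (hs.isClique ha (mem_of_mem_erase hy) (ne_of_mem_erase hy).symm)
    suffices j = i by subst this; exact hj
    by_contra hji
    have hyi : y i = a i := by rcases hj with rfl | rfl <;> simp [Ne.symm hji]
    have hyj : y j ≠ a j := by rcases hj with rfl | rfl <;> simp
    obtain ⟨l, -, hl⟩ := exists_ne_and_eq_of_adj (hadj y₁ hy₁ y hy (fun h => hi (h ▸ hyi)))
    have hli : l = i := by_contra fun h => hi ((hl i (Ne.symm h)).symm.trans hyi)
    have hlj : l = j := by_contra fun h => hyj ((hl j (Ne.symm h)).trans (hrest j hji))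
    exact hji (hlj.symm.trans hli)
  have : #(s.erase a) ≤ 2 :=
    (card_le_card fun y hy => by simpa using key y hy).trans card_le_two
  omega

end Adjacency

def alive (B W : Finset (Fin m → ZMod k)) : Set (Fin m → ZMod k) :=
  (closedNbhd (QCube m k) B ∪ W)ᶜ

lemma closedNbhd_mono {U U' : Set (Fin m → ZMod k)} (h : U ⊆ U') :
    closedNbhd (QCube m k) U ⊆ closedNbhd (QCube m k) U' := by
  rintro x (hx | ⟨u, hu, hadj⟩)
  · exact Or.inl (h hx)
  · exact Or.inr ⟨u, h hu, hadj⟩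

lemma alive_subset_alive {B₁ W₁ B₂ W₂ : Finset (Fin m → ZMod k)} (hB : B₁ ⊆ B₂)
    (hW : (W₁ : Set (Fin m → ZMod k)) ⊆ closedNbhd (QCube m k) B₂ ∪ W₂) :
    alive B₂ W₂ ⊆ alive B₁ W₁ :=
  Set.compl_subset_compl.2 (Set.union_subset ((closedNbhd_mono (mod_cast hB)).trans
    Set.subset_union_left) hW)

section Counting

variable [Fact (1 < k)]

lemma compl_alive (B W : Finset (Fin m → ZMod k)) :
    (alive B W)ᶜ = ↑(B.biUnion ball ∪ W) := by
  ext x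
  simp only [alive, compl_compl, Set.mem_union, mem_closedNbhd_iff, mem_coe, coe_union,
    coe_biUnion, Set.mem_iUnion, exists_prop]

lemma pow_le_ncard_alive (B W : Finset (Fin m → ZMod k)) :
    k ^ m ≤ (alive B W).ncard + ((2 * m + 1) * #B + #W) := by
  have hbound : (alive B W)ᶜ.ncard ≤ (2 * m + 1) * #B + #W := by
    rw [compl_alive, Set.ncard_coe_finset]
    calc #(B.biUnion ball ∪ W) ≤ #(B.biUnion ball) + #W := card_union_le _ _
      _ ≤ ∑ u ∈ B, #(ball u) + #W := by gcongr; exact card_biUnion_le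
      _ ≤ ∑ _u ∈ B, (2 * m + 1) + #W := by gcongr with u; exact card_ball_le u
      _ = (2 * m + 1) * #B + #W := by rw [sum_const, smul_eq_mul, mul_comm]
  have htotal := Set.ncard_add_ncard_compl (alive B W)
  rw [Nat.card_fun, Nat.card_zmod, Nat.card_eq_fintype_card, Fintype.card_fin] at htotal
  omega

lemma alive_nonempty_of_card_lt {B W : Finset (Fin m → ZMod k)}
    (h : (2 * m + 1) * #B + #W < k ^ m) : (alive B W).Nonempty := by
  have := pow_le_ncard_alive B W
  exact Set.nonempty_of_ncard_ne_zero (by omega)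

lemma alive_nonempty (hk : 3 ≤ k) {B W : Finset (Fin m → ZMod k)}
    (hbud : 2 * #B + #W < 2 * m) : (alive B W).Nonempty := by
  apply alive_nonempty_of_card_lt
  have h3 : 3 ^ m ≤ k ^ m := Nat.pow_le_pow_left hk m
  obtain ⟨m, rfl⟩ : ∃ m', m = m' + 1 := ⟨m - 1, by omega⟩
  have hB : #B ≤ m := by omega
  rcases Nat.lt_or_ge m 2 with hm | hm
  · interval_cases m <;> norm_num at h3 ⊢ <;> omega
  · have := two_mul_sq_add_two_mul_le_three_pow (m := m + 1) (by omega)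
    nlinarith [Nat.mul_le_mul_left (2 * m) hB]

lemma alive_nonempty_of_card_le_two (hk : 3 ≤ k) (hm : 2 ≤ m)
    {B : Finset (Fin m → ZMod k)} (hB : #B ≤ 2) : (alive B ∅).Nonempty := by
  have hfree : ∀ i, ∃ r : ZMod k, r ∉ B.image (· i) := fun i => by
    obtain ⟨r, -, hr⟩ := exists_mem_notMem_of_card_lt_card (s := B.image (· i)) (t := univ)
      (card_image_le.trans_lt (by simpa using hB.trans_lt hk))
    exact ⟨r, hr⟩
  let i₀ : Fin m := ⟨0, by omega⟩
  let i₁ : Fin m := ⟨1, by omega⟩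
  obtain ⟨r₀, hr₀⟩ := hfree i₀
  obtain ⟨r₁, hr₁⟩ := hfree i₁
  refine ⟨Function.update (fun _ => r₁) i₀ r₀, ?_⟩
  simp only [alive, coe_empty, Set.union_empty, Set.mem_compl_iff, mem_closedNbhd_iff, mem_coe,
    not_exists, not_and]
  intro c hc
  have hne : i₀ ≠ i₁ := by simp [i₀, i₁, Fin.ext_iff]
  refine notMem_ball_of_ne_of_ne hne ?_ ?_
  · simpa using fun h => hr₀ (mem_image.2 ⟨c, hc, h.symm⟩)
  · simpa [Function.update_of_ne hne.symm] using fun h => hr₁ (mem_image.2 ⟨c, hc, h.symm⟩)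

lemma four_le_ncard_alive (hk : 3 ≤ k) (hm : 2 ≤ m) {B : Finset (Fin m → ZMod k)}
    (hB : #B < m) :
    4 ≤ (alive B ∅).ncard := by
  have hcount := pow_le_ncard_alive B ∅
  have h3 : 3 ^ m ≤ k ^ m := Nat.pow_le_pow_left hk m
  rw [card_empty, add_zero] at hcount
  rcases Nat.lt_or_ge m 3 with hm3 | hm3
  · interval_cases m
    norm_num at h3 hcount
    omega
  · have := two_mul_sq_add_two_mul_le_three_pow hm3
    nlinarith [Nat.mul_le_mul_left (2 * m + 1) (show #B + 1 ≤ m by omega)]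

end Counting

section Layers

-- The height of a vertex of `Q_{m+1}^k` is its first coordinate.
def slice (s : Finset (Fin (m + 1) → ZMod k)) (j : ZMod k) : Finset (Fin (m + 1) → ZMod k) :=
  {u ∈ s | u 0 = j}

def layerBalls (B : Finset (Fin (m + 1) → ZMod k)) (j : ZMod k) : Finset (Fin m → ZMod k) :=
  (slice B j).image Fin.tail

def layerPts (B W : Finset (Fin (m + 1) → ZMod k)) (j : ZMod k) : Finset (Fin m → ZMod k) :=
  (slice B (j - 1) ∪ slice B (j + 1) ∪ slice W j).image Fin.tail

/-- The layer `j` of `Q_{m+1}^k` is called bad when its cost is at least `2m`, so that the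
induction hypothesis does not apply to it. -/
def layerCost (B W : Finset (Fin (m + 1) → ZMod k)) (j : ZMod k) : ℕ :=
  2 * #(slice B j) + #(slice B (j - 1)) + #(slice B (j + 1)) + #(slice W j)

lemma layer_budget_le (B W : Finset (Fin (m + 1) → ZMod k)) (j : ZMod k) :
    2 * #(layerBalls B j) + #(layerPts B W j) ≤ layerCost B W j := by
  have h1 : #(layerBalls B j) ≤ #(slice B j) := card_image_le
  have h2 : #(layerPts B W j) ≤ #(slice B (j - 1)) + #(slice B (j + 1)) + #(slice W j) :=
    card_image_le.trans <| (card_union_le _ _).trans <| by gcongr; exact card_union_le _ _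
  unfold layerCost
  omega

lemma sum_card_slice_le (s : Finset (Fin (m + 1) → ZMod k)) (H : Finset (ZMod k)) :
    ∑ h ∈ H, #(slice s h) ≤ #s := by
  simp only [slice]
  rw [sum_card_fiberwise_eq_card_filter]
  exact card_filter_le _ _

theorem cons_mem_alive_iff [Fact (1 < k)] {B W : Finset (Fin (m + 1) → ZMod k)} {j : ZMod k}
    {b : Fin m → ZMod k} :
    Fin.cons j b ∈ alive B W ↔ b ∈ alive (layerBalls B j) (layerPts B W j) := by
  simp only [alive, Set.mem_compl_iff, not_iff_not, Set.mem_union, closedNbhd, Set.mem_ofPred_eq,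
    mem_coe, layerBalls, layerPts, coe_image, Set.mem_image, mem_union, slice,
    mem_filter, Fin.exists_fin_succ_pi, Fin.cons_zero, Fin.tail_cons, adj_cons_cons_iff]
  constructor
  · rintro ((h | ⟨a, v, hv, ⟨ha, rfl⟩ | ⟨rfl, hadj⟩⟩) | h)
    · exact Or.inl (Or.inl ⟨j, b, ⟨h, rfl⟩, rfl⟩)
    · exact Or.inr ⟨a, _, Or.inl (ha.elim (fun ha => Or.inr ⟨hv, ha⟩) fun ha => Or.inl ⟨hv, ha⟩),
        rfl⟩
    · exact Or.inl (Or.inr ⟨v, ⟨a, v, ⟨hv, rfl⟩, rfl⟩, hadj⟩)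
    · exact Or.inr ⟨j, b, Or.inr ⟨h, rfl⟩, rfl⟩
  · rintro ((⟨a, v, ⟨hv, rfl⟩, rfl⟩ | ⟨u, ⟨a, v, ⟨hv, rfl⟩, rfl⟩, hadj⟩) |
        ⟨a, v, (⟨hv, rfl⟩ | ⟨hv, rfl⟩) | ⟨hv, rfl⟩, rfl⟩)
    · exact Or.inl (Or.inl hv)
    · exact Or.inl (Or.inr ⟨a, _, hv, Or.inr ⟨rfl, hadj⟩⟩)
    · exact Or.inl (Or.inr ⟨_, v, hv, Or.inl ⟨Or.inr rfl, rfl⟩⟩)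
    · exact Or.inl (Or.inr ⟨_, v, hv, Or.inl ⟨Or.inl rfl, rfl⟩⟩)
    · exact Or.inr hv

end Layers

section BadLayers

lemma notMem_triple_comm {j j' : ZMod k} (h : j' ∉ ({j - 1, j, j + 1} : Finset (ZMod k))) :
    j ∉ ({j' - 1, j', j' + 1} : Finset (ZMod k)) := by
  simp only [mem_insert, mem_singleton, not_or] at h ⊢
  exact ⟨fun e => h.2.2 (by rw [e]; ring), fun e => h.2.1 e.symm,
    fun e => h.1 (by rw [e]; ring)⟩

variable [Fact (1 < k)] {B W : Finset (Fin (m + 1) → ZMod k)}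

/-- The obstacles that do not enter the cost of a bad layer use at most one unit of the budget,
balls centred at heights outside `{j - 1, j, j + 1}` counting twice. -/
lemma remote_le_one_of_bad (hk : 3 ≤ k) (hbud : 2 * #B + #W ≤ 2 * m + 1) {j : ZMod k}
    (hbad : 2 * m ≤ layerCost B W j) {H H' : Finset (ZMod k)}
    (hH : Disjoint H {j - 1, j, j + 1}) (hH' : j ∉ H') :
    #(slice B (j - 1)) + #(slice B (j + 1)) + 2 * ∑ h ∈ H, #(slice B h) +
      ∑ h ∈ H', #(slice W h) ≤ 1 := by
  have hB := sum_card_slice_le B ({j - 1, j, j + 1} ∪ H)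
  rw [sum_union hH.symm, sum_insert (by simp [sub_one_ne_add_one hk]), sum_pair (by simp)] at hB
  have hW := sum_card_slice_le W (insert j H')
  rw [sum_insert hH'] at hW
  unfold layerCost at hbad
  omega

lemma exists_obstacle_of_cons_not_mem_alive {j h : ZMod k} {b : Fin m → ZMod k}
    (hx : Fin.cons j b ∈ alive B W) (hy : Fin.cons h b ∉ alive B W) :
    0 < #(slice B h) ∨ 0 < #(slice W h) ∨
      ∃ h', (h' = h - 1 ∨ h' = h + 1) ∧ h' ∉ ({j - 1, j, j + 1} : Finset (ZMod k)) ∧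
        0 < #(slice B h') := by
  rw [cons_mem_alive_iff] at hx hy
  simp only [alive, Set.mem_compl_iff, Set.mem_union, not_or, mem_coe] at hx
  simp only [alive, Set.mem_compl_iff, Set.mem_union, not_not, mem_coe] at hy
  have hfar : ∀ u ∈ B, Fin.tail u = b → u 0 ∉ ({j - 1, j, j + 1} : Finset (ZMod k)) := by
    rintro u hu rfl hmem
    simp only [mem_insert, mem_singleton] at hmem
    rcases hmem with h0 | h0 | h0
    · exact hx.2 (mem_image_of_mem _ (by simp [slice, hu, h0]))
    · exact hx.1 (Or.inl (mem_image_of_mem _ (by simp [slice, hu, h0])))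
    · exact hx.2 (mem_image_of_mem _ (by simp [slice, hu, h0]))
  rcases hy with hball | hpt
  · left
    by_contra h0
    simp only [not_lt, Nat.le_zero, card_eq_zero] at h0
    simp [closedNbhd, layerBalls, h0] at hball
  · obtain ⟨u, hu, rfl⟩ := mem_image.1 hpt
    simp only [slice, mem_union, mem_filter] at hu
    rcases hu with (⟨hu, hu0⟩ | ⟨hu, hu0⟩) | hu
    · exact Or.inr <| Or.inr ⟨u 0, Or.inl hu0, hfar u hu rfl, card_pos.2 ⟨u, by simp [slice, hu]⟩⟩
    · exact Or.inr <| Or.inr ⟨u 0, Or.inr hu0, hfar u hu rfl, card_pos.2 ⟨u, by simp [slice, hu]⟩⟩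
    · exact Or.inr (Or.inl (card_pos.2 ⟨u, by simpa [slice] using hu⟩))

lemma card_slice_eq_zero_of_bad (hk : 3 ≤ k) (hbud : 2 * #B + #W ≤ 2 * m + 1) {j h : ZMod k}
    (hbad : 2 * m ≤ layerCost B W j) (hh : h ∉ ({j - 1, j, j + 1} : Finset (ZMod k))) :
    #(slice B h) = 0 := by
  have := remote_le_one_of_bad hk hbud hbad (H := {h}) (H' := ∅) (disjoint_singleton_left.2 hh)
    (notMem_empty j)
  simp only [sum_singleton, sum_empty] at this
  omega

lemma mem_triple_of_bad (hk : 3 ≤ k) (hm : 1 ≤ m) (hbud : 2 * #B + #W ≤ 2 * m + 1)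
    {j j' : ZMod k} (hbad : 2 * m ≤ layerCost B W j) (hbad' : 2 * m ≤ layerCost B W j') :
    j' ∈ ({j - 1, j, j + 1} : Finset (ZMod k)) := by
  by_contra hfar
  have h := remote_le_one_of_bad hk hbud hbad (H := {j'}) (H' := {j'})
    (disjoint_singleton_left.2 hfar)
    (by simpa using fun e => hfar (by simp [e]))
  have h' := remote_le_one_of_bad hk hbud hbad' (H := {j}) (H' := {j})
    (disjoint_singleton_left.2 (notMem_triple_comm hfar))
    (by simpa using fun e => hfar (by simp [e]))
  simp only [sum_singleton] at h h'
  unfold layerCost at hbad hbad'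
  omega

lemma not_three_consecutive_bad (hk : 3 ≤ k) (hm : 1 ≤ m) (hbud : 2 * #B + #W ≤ 2 * m + 1)
    {j : ZMod k} (hbad₀ : 2 * m ≤ layerCost B W (j - 1)) (hbad₁ : 2 * m ≤ layerCost B W j)
    (hbad₂ : 2 * m ≤ layerCost B W (j + 1)) : False := by
  have h₁ := remote_le_one_of_bad hk hbud hbad₁ (H := ∅) (H' := {j - 1, j + 1}) (by simp)
    (by simp [eq_comm (a := j)])
  have h₀ := remote_le_one_of_bad hk hbud hbad₀ (H := ∅) (H' := {j}) (by simp) (by simp)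
  have h₂ := remote_le_one_of_bad hk hbud hbad₂ (H := ∅) (H' := {j}) (by simp) (by simp)
  rw [sum_pair (sub_one_ne_add_one hk j)] at h₁
  simp only [sum_empty, sum_singleton, sub_add_cancel, add_sub_cancel_right] at h₀ h₁ h₂
  unfold layerCost at hbad₀ hbad₁ hbad₂
  simp only [sub_add_cancel, add_sub_cancel_right] at hbad₀ hbad₂
  omega

lemma card_slice_pos_of_bad (hk : 3 ≤ k) (hbud : 2 * #B + #W ≤ 2 * m + 1) {j h : ZMod k}
    (hbad : 2 * m ≤ layerCost B W j) {b : Fin m → ZMod k} (hx : Fin.cons j b ∈ alive B W)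
    (hy : Fin.cons h b ∉ alive B W) : 0 < #(slice B h) ∨ 0 < #(slice W h) := by
  rcases exists_obstacle_of_cons_not_mem_alive hx hy with h | h | ⟨h', -, hfar, h⟩
  · exact Or.inl h
  · exact Or.inr h
  · have := card_slice_eq_zero_of_bad hk hbud hbad hfar
    omega

lemma card_slice_neighbours_le_one_of_bad (hk : 3 ≤ k) (hbud : 2 * #B + #W ≤ 2 * m + 1)
    {j : ZMod k} (hbad : 2 * m ≤ layerCost B W j) :
    #(slice B (j - 1)) + #(slice B (j + 1)) + #(slice W (j - 1)) + #(slice W (j + 1)) ≤ 1 := by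
  have h := remote_le_one_of_bad hk hbud hbad (H := ∅) (H' := {j - 1, j + 1}) (by simp)
    (by simp [eq_comm (a := j)])
  rw [sum_pair (sub_one_ne_add_one hk j)] at h
  simp only [sum_empty] at h
  omega

lemma cons_succ_or_pred_mem_alive_of_bad (hk : 3 ≤ k) (hbud : 2 * #B + #W ≤ 2 * m + 1)
    {j : ZMod k} (hbad : 2 * m ≤ layerCost B W j) {b : Fin m → ZMod k}
    (hx : Fin.cons j b ∈ alive B W) :
    Fin.cons (j + 1) b ∈ alive B W ∨ Fin.cons (j - 1) b ∈ alive B W := by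
  by_contra! h
  have := card_slice_neighbours_le_one_of_bad hk hbud hbad
  rcases card_slice_pos_of_bad hk hbud hbad hx h.1 with h₁ | h₁ <;>
    rcases card_slice_pos_of_bad hk hbud hbad hx h.2 with h₂ | h₂ <;> omega

lemma cons_sub_one_mem_alive_of_bad (hk : 3 ≤ k) (hm : 1 ≤ m) (hbud : 2 * #B + #W ≤ 2 * m + 1)
    {j : ZMod k} (hbad : 2 * m ≤ layerCost B W j) (hbad' : 2 * m ≤ layerCost B W (j + 1))
    {b : Fin m → ZMod k} (hx : Fin.cons j b ∈ alive B W) : Fin.cons (j - 1) b ∈ alive B W := by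
  by_contra hy
  have h := card_slice_neighbours_le_one_of_bad hk hbud hbad
  have h' := remote_le_one_of_bad hk hbud hbad' (H := ∅) (H' := {j - 1, j}) (by simp)
    (by simp [(sub_one_ne_add_one hk j).symm])
  rw [sum_pair (by simp)] at h'
  simp only [sum_empty, add_sub_cancel_right] at h'
  unfold layerCost at hbad hbad'
  simp only [add_sub_cancel_right] at hbad'
  rcases card_slice_pos_of_bad hk hbud hbad hx hy with h₁ | h₁ <;> omega

lemma cons_add_one_mem_alive_of_bad (hk : 3 ≤ k) (hm : 1 ≤ m) (hbud : 2 * #B + #W ≤ 2 * m + 1)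
    {j : ZMod k} (hbad : 2 * m ≤ layerCost B W j) (hbad' : 2 * m ≤ layerCost B W (j - 1))
    {b : Fin m → ZMod k} (hx : Fin.cons j b ∈ alive B W) : Fin.cons (j + 1) b ∈ alive B W := by
  by_contra hy
  have h := card_slice_neighbours_le_one_of_bad hk hbud hbad
  have h' := remote_le_one_of_bad hk hbud hbad' (H := ∅) (H' := {j + 1, j}) (by simp)
    (by simp [sub_one_ne_add_one hk j])
  rw [sum_pair (by simp)] at h'
  simp only [sum_empty, sub_add_cancel] at h'
  unfold layerCost at hbad hbad'
  simp only [sub_add_cancel] at hbad'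
  rcases card_slice_pos_of_bad hk hbud hbad hx hy with h₁ | h₁ <;> omega

lemma exists_good_adjacent_of_bad (hk : 3 ≤ k) (hm : 1 ≤ m) (hbud : 2 * #B + #W ≤ 2 * m + 1)
    {j : ZMod k} (hbad : 2 * m ≤ layerCost B W j) {b : Fin m → ZMod k}
    (hx : Fin.cons j b ∈ alive B W) :
    ∃ h, (h = j + 1 ∨ h = j - 1) ∧ layerCost B W h < 2 * m ∧ Fin.cons h b ∈ alive B W := by
  by_cases hup : 2 * m ≤ layerCost B W (j + 1)
  · refine ⟨j - 1, Or.inr rfl, ?_, cons_sub_one_mem_alive_of_bad hk hm hbud hbad hup hx⟩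
    by_contra! hdown
    exact not_three_consecutive_bad hk hm hbud hdown hbad hup
  by_cases hdown : 2 * m ≤ layerCost B W (j - 1)
  · exact ⟨j + 1, Or.inl rfl, by omega, cons_add_one_mem_alive_of_bad hk hm hbud hbad hdown hx⟩
  rcases cons_succ_or_pred_mem_alive_of_bad hk hbud hbad hx with h | h
  · exact ⟨j + 1, Or.inl rfl, by omega, h⟩
  · exact ⟨j - 1, Or.inr rfl, by omega, h⟩

lemma exists_bad_subset_pair (hk : 3 ≤ k) (hm : 1 ≤ m) (hbud : 2 * #B + #W ≤ 2 * m + 1) :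
    ∃ c : ZMod k, ∀ j, 2 * m ≤ layerCost B W j → j = c ∨ j = c + 1 := by
  by_cases hbad : ∃ j₀, 2 * m ≤ layerCost B W j₀
  swap
  · exact ⟨0, fun j hj => (hbad ⟨j, hj⟩).elim⟩
  obtain ⟨j₀, hj₀⟩ := hbad
  have hnear := fun j (hj : 2 * m ≤ layerCost B W j) => mem_triple_of_bad hk hm hbud hj₀ hj
  simp only [mem_insert, mem_singleton] at hnear
  by_cases hup : 2 * m ≤ layerCost B W (j₀ + 1)
  · refine ⟨j₀, fun j hj => ?_⟩
    rcases hnear j hj with rfl | rfl | rfl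
    · exact (not_three_consecutive_bad hk hm hbud hj hj₀ hup).elim
    · exact Or.inl rfl
    · exact Or.inr rfl
  by_cases hdown : 2 * m ≤ layerCost B W (j₀ - 1)
  · refine ⟨j₀ - 1, fun j hj => ?_⟩
    rcases hnear j hj with rfl | rfl | rfl
    · exact Or.inl rfl
    · exact Or.inr (sub_add_cancel _ _).symm
    · exact (hup hj).elim
  · refine ⟨j₀, fun j hj => ?_⟩
    rcases hnear j hj with rfl | rfl | rfl
    · exact (hdown hj).elim
    · exact Or.inl rfl
    · exact (hup hj).elim

end BadLayers

section GoodLayers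

variable [Fact (1 < k)] {B W : Finset (Fin (m + 1) → ZMod k)}

lemma cons_mem_alive_of_mem_alive_pair {j : ZMod k} {b : Fin m → ZMod k}
    (hb : b ∈ alive (layerBalls B j ∪ layerBalls B (j + 1))
      ((slice B (j - 1) ∪ slice B (j + 1 + 1) ∪ slice W j ∪ slice W (j + 1)).image Fin.tail)) :
    Fin.cons j b ∈ alive B W ∧ Fin.cons (j + 1) b ∈ alive B W := by
  set B' := layerBalls B j ∪ layerBalls B (j + 1)
  set W' := (slice B (j - 1) ∪ slice B (j + 1 + 1) ∪ slice W j ∪ slice W (j + 1)).image Fin.tail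
  have hB' : (B' : Set (Fin m → ZMod k)) ⊆ closedNbhd (QCube m k) B' ∪ W' :=
    Set.subset_union_left.trans Set.subset_union_left
  refine ⟨cons_mem_alive_iff.2 (alive_subset_alive subset_union_left ?_ hb),
    cons_mem_alive_iff.2 (alive_subset_alive subset_union_right ?_ hb)⟩
  · intro x hx
    simp only [layerPts, coe_image, Set.mem_image, mem_coe, mem_union] at hx
    obtain ⟨u, hu, rfl⟩ := hx
    rcases hu with (hu | hu) | hu
    · exact Or.inr (mem_image_of_mem _ (by simp [hu]))
    · exact hB' (mem_union_right _ (mem_image_of_mem _ hu))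
    · exact Or.inr (mem_image_of_mem _ (by simp [hu]))
  · intro x hx
    simp only [layerPts, coe_image, Set.mem_image, mem_coe, mem_union,
      add_sub_cancel_right] at hx
    obtain ⟨u, hu, rfl⟩ := hx
    rcases hu with (hu | hu) | hu
    · exact hB' (mem_union_left _ (mem_image_of_mem _ hu))
    · exact Or.inr (mem_image_of_mem _ (by simp [hu]))
    · exact Or.inr (mem_image_of_mem _ (by simp [hu]))

lemma exists_cons_mem_alive_of_good (hk : 3 ≤ k) (hm : 1 ≤ m)
    (hbud : 2 * #B + #W ≤ 2 * m + 1) {j : ZMod k}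
    (hj : layerCost B W j < 2 * m) (hj' : layerCost B W (j + 1) < 2 * m) :
    ∃ b, Fin.cons j b ∈ alive B W ∧ Fin.cons (j + 1) b ∈ alive B W := by
  set B' := layerBalls B j ∪ layerBalls B (j + 1)
  set W' := (slice B (j - 1) ∪ slice B (j + 1 + 1) ∪ slice W j ∪ slice W (j + 1)).image Fin.tail
  suffices (alive B' W').Nonempty from
    let ⟨_, hb⟩ := this; ⟨_, cons_mem_alive_of_mem_alive_pair hb⟩
  have hX : #B' ≤ #(slice B j) + #(slice B (j + 1)) :=
    (card_union_le _ _).trans (add_le_add card_image_le card_image_le)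
  have hY :
      #W' ≤ #(slice B (j - 1)) + #(slice B (j + 1 + 1)) + #(slice W j) + #(slice W (j + 1)) :=
    card_image_le.trans <| (card_union_le _ _).trans <| by
      gcongr; exact (card_union_le _ _).trans (by gcongr; exact card_union_le _ _)
  have hA := sum_card_slice_le B {j, j + 1}
  rw [sum_pair (by simp)] at hA
  unfold layerCost at hj hj'
  simp only [add_sub_cancel_right] at hj'
  -- Counting fails only for two balls in `Q_2^3`, and two crosses never cover the `3 × 3` grid.
  by_cases hspecial : m = 2 ∧ k = 3 ∧ 2 ≤ #B'
  · obtain ⟨rfl, rfl, h2⟩ := hspecial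
    have hW' : W' = ∅ := card_eq_zero.1 (by omega)
    exact hW' ▸ alive_nonempty_of_card_le_two hk le_rfl (by omega)
  apply alive_nonempty_of_card_lt
  have h3 : 3 ^ m ≤ k ^ m := Nat.pow_le_pow_left hk m
  rcases Nat.lt_or_ge m 3 with hm3 | hm3
  · interval_cases m
    · norm_num at h3 ⊢; omega
    · rcases Nat.lt_or_ge k 4 with hk4 | hk4
      · have : k = 3 := by omega
        subst this
        norm_num at h3 ⊢; omega
      · have : 16 ≤ k ^ 2 := by nlinarith
        omega
  · have := two_mul_sq_add_two_mul_le_three_pow hm3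
    obtain ⟨m, rfl⟩ : ∃ m', m = m' + 1 := ⟨m - 1, by omega⟩
    nlinarith [Nat.mul_le_mul_right m (show #B' ≤ m + 1 by omega)]

end GoodLayers

lemma forall_of_propagate (hk : 3 ≤ k) {good P : ZMod k → Prop} {c : ZMod k}
    (hgood : ∀ j, j ≠ c → j ≠ c + 1 → good j)
    (hstep : ∀ j, good j → good (j + 1) → (P j ↔ P (j + 1))) (hbase : P (c + 2)) :
    ∀ j, good j → P j := by
  have : NeZero k := ⟨by omega⟩
  have : Fact (1 < k) := ⟨by omega⟩
  have hgood_arc (s : ℕ) (hs : s + 3 ≤ k) : good (c + 2 + s) := by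
    refine hgood _ (fun h => natCast_ne_zero_of_pos_of_lt (show 0 < s + 2 by omega)
      (show s + 2 < k by omega) ?_) (fun h => natCast_ne_zero_of_pos_of_lt
      (show 0 < s + 1 by omega) (show s + 1 < k by omega) ?_) <;>
    · push_cast; linear_combination h
  have hP_arc (s : ℕ) (hs : s + 3 ≤ k) : P (c + 2 + s) := by
    induction s with
    | zero => simpa using hbase
    | succ s ih =>
      have hgood' : good (c + 2 + s + 1) := by simpa [add_assoc] using hgood_arc (s + 1) hs
      simpa [add_assoc] using (hstep _ (hgood_arc s (by omega)) hgood').1 (ih (by omega))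
  have hP (j : ZMod k) (h₁ : j ≠ c) (h₂ : j ≠ c + 1) : P j := by
    obtain ⟨s, hs, rfl⟩ : ∃ s < k, j = c + 2 + s :=
      ⟨(j - (c + 2)).val, ZMod.val_lt _, by rw [ZMod.natCast_zmod_val]; ring⟩
    refine hP_arc s (by_contra fun hs₃ => ?_)
    rcases (by omega : s + 2 = k ∨ s + 1 = k) with h | h
    · have h0 : ((s + 2 : ℕ) : ZMod k) = 0 := by rw [h, ZMod.natCast_self]
      exact h₁ (by push_cast at h0; linear_combination h0)
    · have h0 : ((s + 1 : ℕ) : ZMod k) = 0 := by rw [h, ZMod.natCast_self]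
      exact h₂ (by push_cast at h0; linear_combination h0)
  intro j hj
  by_cases h₁ : j = c
  · subst h₁
    have hne : j - 1 ≠ j := by simp
    have := hstep _ (hgood _ hne (sub_one_ne_add_one hk j)) (by simpa using hj)
    simpa using this.1 (hP _ hne (sub_one_ne_add_one hk j))
  by_cases h₂ : j = c + 1
  · subst h₂
    have hne : c + 2 ≠ c := fun h => two_ne_zero_of_three_le hk (by linear_combination h)
    have := hstep _ hj (hgood _ (by simpa [add_assoc, one_add_one_eq_two] using hne) (by simp))
    exact this.2 (by simpa [add_assoc, one_add_one_eq_two] using hbase)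
  exact hP j h₁ h₂

section Connectivity

variable [Fact (1 < k)]

abbrev aliveGraph (B W : Finset (Fin m → ZMod k)) : SimpleGraph (alive B W) :=
  (QCube m k).induce (alive B W)

def layerHom (B W : Finset (Fin (m + 1) → ZMod k)) (j : ZMod k) :
    aliveGraph (layerBalls B j) (layerPts B W j) →g aliveGraph B W where
  toFun b := ⟨Fin.cons j b, cons_mem_alive_iff.2 b.2⟩
  map_rel' h := adj_cons_cons_iff.2 (Or.inr ⟨rfl, h⟩)

lemma reachable_cons_cons {B W : Finset (Fin (m + 1) → ZMod k)} {j : ZMod k}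
    (hpre : (aliveGraph (layerBalls B j) (layerPts B W j)).Preconnected) {b b' : Fin m → ZMod k}
    (hb : Fin.cons j b ∈ alive B W) (hb' : Fin.cons j b' ∈ alive B W) :
    (aliveGraph B W).Reachable ⟨_, hb⟩ ⟨_, hb'⟩ :=
  (hpre ⟨b, cons_mem_alive_iff.1 hb⟩ ⟨b', cons_mem_alive_iff.1 hb'⟩).map (layerHom B W j)

lemma aliveGraph_adj_cons_cons {B W : Finset (Fin (m + 1) → ZMod k)} {j h : ZMod k}
    (hh : h = j + 1 ∨ h = j - 1) {b : Fin m → ZMod k}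
    (hb : Fin.cons j b ∈ alive B W) (hb' : Fin.cons h b ∈ alive B W) :
    (aliveGraph B W).Adj ⟨_, hb⟩ ⟨_, hb'⟩ := by
  refine adj_cons_cons_iff.2 (Or.inl ⟨?_, rfl⟩)
  rcases hh with rfl | rfl
  · exact Or.inr (by ring)
  · exact Or.inl (by ring)

lemma preconnected_one (hk : 3 ≤ k) {B W : Finset (Fin 1 → ZMod k)}
    (hbud : 2 * #B + #W < 2) : (aliveGraph B W).Preconnected := by
  obtain rfl : B = ∅ := card_eq_zero.1 (by omega)
  obtain ⟨p, hp⟩ : ∃ p : ZMod k, ∀ w ∈ W, w 0 = p := by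
    rcases W.eq_empty_or_nonempty with rfl | ⟨w, hw⟩
    · exact ⟨0, by simp⟩
    · exact ⟨w 0, fun w' hw' => by rw [card_le_one.1 (by omega) w' hw' w hw]⟩
  have halive (j : ZMod k) (hj : j ≠ p) : Fin.cons j Fin.elim0 ∈ alive ∅ W := by
    simp only [alive, closedNbhd, coe_empty, Set.empty_union, Set.mem_compl_iff]
    simpa using fun hw => hj (by simpa using hp _ hw)
  -- the vertex at height `p + 1`, written as `c + 2` for the `c = p - 1` used below
  let x₀ : alive ∅ W := ⟨_, halive (p - 1 + 2) (fun h => one_ne_zero (α := ZMod k)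
    (by linear_combination h))⟩
  have hreach_good : ∀ j, j ≠ p → ∀ hb : Fin.cons j Fin.elim0 ∈ alive ∅ W,
      (aliveGraph ∅ W).Reachable ⟨_, hb⟩ x₀ := by
    refine forall_of_propagate hk (c := p - 1) (fun j _ h => by simpa using h)
      (fun j hj hj' => ?_) (fun _ => .rfl)
    have hedge := (aliveGraph_adj_cons_cons (Or.inl rfl) (halive j hj) (halive _ hj')).reachable
    exact ⟨fun h _ => hedge.symm.trans (h _), fun h _ => hedge.trans (h _)⟩
  have hreach : ∀ x : alive ∅ W, (aliveGraph ∅ W).Reachable x x₀ := by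
    rintro ⟨x, hx⟩
    obtain ⟨j, rfl⟩ : ∃ j, x = Fin.cons j Fin.elim0 :=
      ⟨x 0, funext fun i => by fin_cases i; rfl⟩
    by_cases hj : j = p
    · subst hj
      have hj' : j + 1 ≠ j := by simp
      exact (aliveGraph_adj_cons_cons (Or.inl rfl) hx (halive _ hj')).reachable.trans
        (hreach_good _ hj' _)
    · exact hreach_good j hj hx
  exact fun x y => (hreach x).trans (hreach y).symm

lemma preconnected_succ (hk : 3 ≤ k) (hm : 1 ≤ m)
    (ih : ∀ B W : Finset (Fin m → ZMod k), 2 * #B + #W < 2 * m → (aliveGraph B W).Preconnected)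
    {B W : Finset (Fin (m + 1) → ZMod k)} (hbud : 2 * #B + #W < 2 * (m + 1)) :
    (aliveGraph B W).Preconnected := by
  have hbud' : 2 * #B + #W ≤ 2 * m + 1 := by omega
  have hlayer (j : ZMod k) (hj : layerCost B W j < 2 * m) :
      (aliveGraph (layerBalls B j) (layerPts B W j)).Preconnected :=
    ih _ _ ((layer_budget_le B W j).trans_lt hj)
  obtain ⟨c, hc⟩ := exists_bad_subset_pair hk hm hbud'
  have hgood (j : ZMod k) (h₁ : j ≠ c) (h₂ : j ≠ c + 1) : layerCost B W j < 2 * m := by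
    by_contra! h
    rcases hc j h with rfl | rfl <;> contradiction
  have hc₂ : layerCost B W (c + 2) < 2 * m := hgood _
    (fun h => two_ne_zero_of_three_le hk (by linear_combination h))
    (fun h => one_ne_zero (α := ZMod k) (by linear_combination h))
  obtain ⟨b₀, hb₀⟩ := alive_nonempty hk ((layer_budget_le B W (c + 2)).trans_lt hc₂)
  let x₀ : alive B W := ⟨Fin.cons (c + 2) b₀, cons_mem_alive_iff.2 hb₀⟩
  have hreach_good : ∀ j, layerCost B W j < 2 * m → ∀ b (hb : Fin.cons j b ∈ alive B W),
      (aliveGraph B W).Reachable ⟨_, hb⟩ x₀ := by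
    refine forall_of_propagate hk hgood (fun j hj hj' => ?_) (fun b hb =>
      reachable_cons_cons (hlayer _ hc₂) hb _)
    obtain ⟨b₁, hb₁, hb₁'⟩ := exists_cons_mem_alive_of_good hk hm hbud' hj hj'
    have hedge := (aliveGraph_adj_cons_cons (Or.inl rfl) hb₁ hb₁').reachable
    exact ⟨fun h b hb => (reachable_cons_cons (hlayer _ hj') hb hb₁').trans
        (hedge.symm.trans (h _ hb₁)),
      fun h b hb => (reachable_cons_cons (hlayer _ hj) hb hb₁).trans (hedge.trans (h _ hb₁'))⟩
  have hreach : ∀ x : alive B W, (aliveGraph B W).Reachable x x₀ := by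
    rintro ⟨x, hx⟩
    obtain ⟨j, b, rfl⟩ : ∃ j b, x = Fin.cons j b :=
      ⟨x 0, Fin.tail x, (Fin.cons_self_tail x).symm⟩
    by_cases hj : layerCost B W j < 2 * m
    · exact hreach_good j hj b hx
    · obtain ⟨h, hh, hgood_h, hb⟩ := exists_good_adjacent_of_bad hk hm hbud' (by omega) hx
      exact (aliveGraph_adj_cons_cons hh hx hb).reachable.trans (hreach_good h hgood_h b hb)
  exact fun x y => (hreach x).trans (hreach y).symm

theorem preconnected_aliveGraph (hk : 3 ≤ k) (hm : 1 ≤ m) {B W : Finset (Fin m → ZMod k)}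
    (hbud : 2 * #B + #W < 2 * m) : (aliveGraph B W).Preconnected := by
  induction m, hm using Nat.le_induction with
  | base => exact preconnected_one hk hbud
  | succ m hm ih => exact preconnected_succ hk hm (fun _ _ => ih) hbud

end Connectivity

theorem not_survivalBad (hk : 3 ≤ k) (hm : 2 ≤ m) {U : Set (Fin m → ZMod k)} (hU : U.Finite)
    (hcard : U.ncard < m) : ¬ SurvivalBad (QCube m k) U := by
  have : Fact (1 < k) := ⟨by omega⟩
  have hB : #hU.toFinset < m := by rwa [← Set.ncard_eq_toFinset_card U hU]
  have hbud : 2 * #hU.toFinset + #(∅ : Finset (Fin m → ZMod k)) < 2 * m := by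
    rw [card_empty]; omega
  have hne := alive_nonempty hk hbud
  have hpre := preconnected_aliveGraph hk (by omega) hbud
  have h4 := four_le_ncard_alive hk hm hB
  have halive : alive hU.toFinset ∅ = (closedNbhd (QCube m k) U)ᶜ := by simp [alive]
  rw [aliveGraph, halive] at hpre
  rw [halive] at hne h4
  rintro (⟨-, hconn⟩ | hcomplete | hempty)
  · have := hne.to_subtype
    exact hconn (.mk hpre)
  · rw [Set.ncard_eq_toFinset_card _ (Set.toFinite _)] at h4
    obtain ⟨t, ht, htcard⟩ := exists_subset_card_eq h4
    refine cliqueFree_four t ⟨fun x hx y hy hxy => hcomplete x ?_ y ?_ hxy, htcard⟩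
    · simpa using ht hx
    · simpa using ht hy
  · exact hne.ne_empty hempty

theorem exists_survivalBad (hk : 3 ≤ k) (hm : 2 ≤ m) :
    ∃ U : Set (Fin m → ZMod k), U.Finite ∧ U.ncard = m ∧ SurvivalBad (QCube m k) U := by
  have : Fact (1 < k) := ⟨by omega⟩
  obtain ⟨m, rfl⟩ : ∃ m', m = m' + 2 := ⟨m - 2, by omega⟩
  have hsucc (i : Fin (m + 2)) : i + 1 ≠ i := by simp
  let u (i : Fin (m + 2)) : Fin (m + 2) → ZMod k := Pi.single i 1 - Pi.single (i + 1) 1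
  have hu_inj : Function.Injective u := by
    intro i j hij
    by_contra hne
    have h := congrFun hij i
    by_cases hi : i = j + 1
    · subst hi
      simp [u, hsucc] at h
      exact two_ne_zero_of_three_le hk (by linear_combination h)
    · simp [u, hne, hi] at h
  refine ⟨Set.range u, Set.finite_range u, ?_, survivalBad_of_isolated (v := 0) ?_ ?_⟩
  · rw [Set.ncard_range_of_injective hu_inj, Nat.card_eq_fintype_card, Fintype.card_fin]
  · simp only [mem_closedNbhd_iff, Set.exists_range_iff, not_exists]
    intro i
    refine notMem_ball_of_ne_of_ne (hsucc i).symm ?_ ?_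
    · simp [u]
    · simp [u, hsucc]
  · intro y hy
    obtain ⟨t, rfl | rfl⟩ := adj_iff.1 hy
    · exact Or.inr ⟨u t, ⟨t, rfl⟩, adj_iff.2 ⟨t + 1, Or.inl (by simp [u])⟩⟩
    · exact Or.inr ⟨u (t - 1), ⟨t - 1, rfl⟩, adj_iff.2 ⟨t - 1, Or.inr (by simp [u])⟩⟩

end QCube

theorem stmt15 (n k : ℕ) (hn : 2 ≤ n) (hk : 3 ≤ k) :
    nbConn (QCube n k) = n := by
  obtain ⟨U, hU, hcard, hbad⟩ := QCube.exists_survivalBad hk hn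
  refine IsLeast.csInf_eq ⟨⟨U, hU, hcard, hbad⟩, ?_⟩
  rintro _ ⟨U', hU', rfl, hbad'⟩
  by_contra! hlt
  exact QCube.not_survivalBad hk hn hU' hlt hbad'
end

section
/- For n ≥ 1 and k ≥ 2, the k-ary n-cube Q_n^k contains no clique on 4 vertices (it is K_4-free). -/
open SimpleGraph

/-! Every edge of `Q_n^k` moves one coordinate by `±1`, and the two edges at a corner of a
triangle move the same coordinate. Hence the three other vertices of a `K₄` all differ from its
first vertex `a` in one common coordinate `j` only, where their values lie in `{a j - 1, a j + 1}`;
two of them therefore coincide. -/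

namespace QCube

variable {n k : ℕ} {a b c : Fin n → ZMod k} {j j' : Fin n}

lemma apply_ne_of_adj (hab : (QCube n k).Adj a b) (hj : ∀ i ≠ j, a i = b i) : a j ≠ b j :=
  fun h => hab.ne <| funext fun i => by
    by_cases hi : i = j
    · exact hi ▸ h
    · exact hj i hi

lemma eq_of_agree_off (hb : ∀ i ≠ j, a i = b i) (hc : ∀ i ≠ j, a i = c i) (h : b j = c j) :
    b = c :=
  funext fun i => by
    by_cases hi : i = j
    · exact hi ▸ h
    · rw [← hb i hi, hc i hi]

lemma direction_eq_of_triangle (hab : (QCube n k).Adj a b) (hac : (QCube n k).Adj a c)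
    (hbc : (QCube n k).Adj b c) (hb : ∀ i ≠ j, a i = b i) (hc : ∀ i ≠ j', a i = c i) :
    j = j' := by
  by_contra hne
  obtain ⟨-, l, -, hl⟩ := hbc
  have hbc_j : b j ≠ c j := hc j hne ▸ (apply_ne_of_adj hab hb).symm
  have hbc_j' : b j' ≠ c j' := hb j' (Ne.symm hne) ▸ apply_ne_of_adj hac hc
  have hjl : j = l := by_contra fun h => hbc_j (hl j h)
  have hj'l : j' = l := by_contra fun h => hbc_j' (hl j' h)
  exact hne (hjl.trans hj'l.symm)

end QCube

lemma eq_sub_one_or_eq_add_one_of_eq_add_one_or_eq_sub_one {R : Type*} [AddGroup R] [One R]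
    {x y : R} (h : x = y + 1 ∨ x = y - 1) : y = x - 1 ∨ y = x + 1 :=
  h.imp (fun h => eq_sub_of_add_eq h.symm) fun h => eq_add_of_sub_eq h.symm

lemma eq_or_eq_or_eq_of_mem_pair {α : Type*} {p q x y z : α} (hx : x = p ∨ x = q)
    (hy : y = p ∨ y = q) (hz : z = p ∨ z = q) : x = y ∨ x = z ∨ y = z := by
  rcases hx with rfl | rfl <;> rcases hy with rfl | rfl <;> rcases hz with rfl | rfl <;> simp

theorem stmt17_general (n k : ℕ) :
    (QCube n k).CliqueFree 4 := by
  rw [cliqueFree_iff]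
  refine ⟨fun f => ?_⟩
  have adj : ∀ {i l : Fin 4}, i ≠ l → (QCube n k).Adj (f i) (f l) :=
    fun h => f.toHom.map_adj h
  have ne : ∀ {i l : Fin 4}, i ≠ l → f i ≠ f l := fun h => f.injective.ne h
  obtain ⟨-, j, hb, hb'⟩ := adj (i := 0) (l := 1) (by decide)
  obtain ⟨-, j₂, hc, hc'⟩ := adj (i := 0) (l := 2) (by decide)
  obtain ⟨-, j₃, hd, hd'⟩ := adj (i := 0) (l := 3) (by decide)
  obtain rfl : j = j₂ :=
    QCube.direction_eq_of_triangle (adj (by decide)) (adj (by decide)) (adj (by decide)) hb' hc'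
  obtain rfl : j = j₃ :=
    QCube.direction_eq_of_triangle (adj (by decide)) (adj (by decide)) (adj (by decide)) hb' hd'
  rcases eq_or_eq_or_eq_of_mem_pair (eq_sub_one_or_eq_add_one_of_eq_add_one_or_eq_sub_one hb)
    (eq_sub_one_or_eq_add_one_of_eq_add_one_or_eq_sub_one hc)
    (eq_sub_one_or_eq_add_one_of_eq_add_one_or_eq_sub_one hd) with h | h | h
  · exact ne (by decide) (QCube.eq_of_agree_off hb' hc' h)
  · exact ne (by decide) (QCube.eq_of_agree_off hb' hd' h)
  · exact ne (by decide) (QCube.eq_of_agree_off hc' hd' h)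

theorem stmt17 (n k : ℕ) (hn : 1 ≤ n) (hk : 2 ≤ k) :
    (QCube n k).CliqueFree 4 :=
  stmt17_general n k
end
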